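/- arXiv:nlin/0110014 — 9 statements merged into one kernel-verified Lean document; each statement's English description precedes it below -/
import Mathlib

section
/- Fix n ≥ 2 and let f : ℝ \ {0} → ℝ be continuously differentiable and either even or odd. On the phase space of points (x,p) ∈ ℝⁿ × ℝⁿ with the x_i pairwise distinct, define H(x,p) = Σ_{j=1}^n cosh(p_j) Π_{k≠j} f(x_j - x_k), P(x,p) = Σ_{j=1}^n sinh(p_j) Π_{k≠j} f(x_j - x_k), and B(x,p) = Σ_{j=1}^n x_j, and define the Poisson bracket of two such functions by {A,C} = Σ_{i=1}^n (∂A/∂p_i · ∂C/∂x_i − ∂A/∂x_i · ∂C/∂p_i). Then {H,B} = P and {P,B} = H hold identically, and {H,P} = 0 holds identically if and only if for all pairwise distinct x₁,…,xₙ one has Σ_{j=1}^n Σ_{k≠j} (f²)'(x_j - x_k) Π_{l≠j,k} f²(x_j - x_l) = 0. -/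
/-!
Write `V j` (`RS_V`) for `∏_{k ≠ j} f (x j - x k)` and `∂ᵢ V j` (`RS_dV`) for its derivative in
`x i`. The momentum derivatives of `H` and `P` are `sinh (p j) * V j` and `cosh (p j) * V j`,
while `B` has gradient `(1, …, 1; 0, …, 0)`; this gives `{H, B} = P` and `{P, B} = H` directly.
The addition formula for `cosh` turns `{H, P}` into `-∑ i j, cosh (p i - p j) * V i * ∂ᵢ V j`.
Evenness or oddness of `f` makes `V i * ∂ᵢ V j` antisymmetric in `i ≠ j`, so only the diagonal
survives, and `∑ i, V i * ∂ᵢ V i` is half of `∑ i, ∂ᵢ (V i ^ 2)`, the left side of the functional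
equation, which does not involve `p`.
-/

open Finset

/-- The Poisson bracket `{A,C} = ∑ i, (∂A/∂p_i · ∂C/∂x_i − ∂A/∂x_i · ∂C/∂p_i)`
of two functions on phase space `(x,p) ∈ ℝⁿ × ℝⁿ`. -/
noncomputable def pbrack {n : ℕ} (A C : (Fin n → ℝ) → (Fin n → ℝ) → ℝ)
    (x p : Fin n → ℝ) : ℝ :=
  ∑ i : Fin n,
    (deriv (fun t => A x (Function.update p i t)) (p i) *
        deriv (fun t => C (Function.update x i t) p) (x i) -
      deriv (fun t => A (Function.update x i t) p) (x i) *
        deriv (fun t => C x (Function.update p i t)) (p i))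

/-- The Ruijsenaars–Schneider Hamiltonian `H = ∑ⱼ cosh(pⱼ) ∏_{k≠j} f(xⱼ−x_k)`. -/
noncomputable def RS_H {n : ℕ} (f : ℝ → ℝ) (x p : Fin n → ℝ) : ℝ :=
  ∑ j : Fin n, Real.cosh (p j) * ∏ k ∈ univ.erase j, f (x j - x k)

/-- The momentum `P = ∑ⱼ sinh(pⱼ) ∏_{k≠j} f(xⱼ−x_k)`. -/
noncomputable def RS_P {n : ℕ} (f : ℝ → ℝ) (x p : Fin n → ℝ) : ℝ :=
  ∑ j : Fin n, Real.sinh (p j) * ∏ k ∈ univ.erase j, f (x j - x k)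

/-- The boost `B = ∑ⱼ xⱼ`. -/
noncomputable def RS_B {n : ℕ} (x _p : Fin n → ℝ) : ℝ := ∑ j : Fin n, x j

open Function

theorem sum_sum_mul_eq_sum_diag {ι R : Type*} [Fintype ι] [CommRing R] [NoZeroDivisors R]
    [CharZero R] (a W : ι → ι → R) (ha : ∀ i j, a i j = a j i)
    (hW : ∀ i j, i ≠ j → W i j + W j i = 0) :
    ∑ i, ∑ j, a i j * W i j = ∑ i, a i i * W i i := by
  have hswap : ∑ i, ∑ j, a i j * W j i = ∑ i, ∑ j, a i j * W i j := by
    rw [sum_comm]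
    simp_rw [ha]
  have hsym : ∑ i, ∑ j, a i j * (W i j + W j i) = ∑ i, a i i * (W i i + W i i) :=
    sum_congr rfl fun i _ => sum_eq_single i
      (fun j _ hji => by rw [hW i j (Ne.symm hji), mul_zero]) (by simp)
  simp_rw [mul_add, sum_add_distrib, hswap] at hsym
  exact sub_eq_zero.1 (add_self_eq_zero.1 (by linear_combination hsym))

section Slices

variable {𝕜 ι : Type*} [NontriviallyNormedField 𝕜] [DecidableEq ι]

theorem hasDerivAt_update_apply (x : ι → 𝕜) (i j : ι) :
    HasDerivAt (fun t => update x i t j) ((Pi.single i 1 : ι → 𝕜) j) (x i) :=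
  hasDerivAt_pi.1 (hasDerivAt_update x i (x i)) j

variable [Fintype ι]

theorem deriv_sum_update (x : ι → 𝕜) (i : ι) :
    deriv (fun t => ∑ j, update x i t j) (x i) = 1 := by
  simpa using (HasDerivAt.fun_sum (u := univ) fun j _ => hasDerivAt_update_apply x i j).deriv

theorem deriv_sum_comp_update_mul {c c' : 𝕜 → 𝕜} (hc : ∀ t, HasDerivAt c (c' t) t)
    (V p : ι → 𝕜) (i : ι) :
    deriv (fun t => ∑ j, c (update p i t j) * V j) (p i) = c' (p i) * V i := by
  have h := HasDerivAt.fun_sum fun j (_ : j ∈ univ) =>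
    ((hc _).comp (p i) (hasDerivAt_update_apply p i j)).mul_const (V j)
  simpa [Pi.single_apply] using h.deriv

end Slices

section Parity

variable {f : ℝ → ℝ} {u : ℝ}

theorem deriv_neg_of_even_off_zero (h : ∀ x, x ≠ 0 → f (-x) = f x) (hu : u ≠ 0) :
    deriv f (-u) = -deriv f u := by
  have heq : (fun x => f (-x)) =ᶠ[nhds u] f := by
    filter_upwards [eventually_ne_nhds hu] with y hy using h y hy
  have := heq.deriv_eq
  rw [deriv_comp_neg] at this
  linarith

theorem deriv_neg_of_odd_off_zero (h : ∀ x, x ≠ 0 → f (-x) = -f x) (hu : u ≠ 0) :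
    deriv f (-u) = deriv f u := by
  have heq : (fun x => f (-x)) =ᶠ[nhds u] (fun x => -f x) := by
    filter_upwards [eventually_ne_nhds hu] with y hy using h y hy
  have := heq.deriv_eq
  rw [deriv_comp_neg, deriv.fun_neg] at this
  linarith

theorem mul_deriv_neg_add_mul_deriv_eq_zero
    (hpar : (∀ x, x ≠ 0 → f (-x) = f x) ∨ (∀ x, x ≠ 0 → f (-x) = -f x)) (hu : u ≠ 0) :
    f u * deriv f (-u) + f (-u) * deriv f u = 0 := by
  rcases hpar with heven | hodd
  · rw [deriv_neg_of_even_off_zero heven hu, heven u hu]; ring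
  · rw [deriv_neg_of_odd_off_zero hodd hu, hodd u hu]; ring

end Parity

section Weights

variable {ι : Type*} [Fintype ι] [DecidableEq ι] (f : ℝ → ℝ)

noncomputable def RS_V (x : ι → ℝ) (j : ι) : ℝ := ∏ k ∈ univ.erase j, f (x j - x k)

noncomputable def RS_dV (x : ι → ℝ) (i j : ι) : ℝ :=
  deriv (fun t => RS_V f (update x i t) j) (x i)

theorem RS_V_update_self (x : ι → ℝ) (j : ι) (t : ℝ) :
    RS_V f (update x j t) j = ∏ k ∈ univ.erase j, f (t - x k) :=
  prod_congr rfl fun k hk => by rw [update_self, update_of_ne (ne_of_mem_erase hk)]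

theorem RS_V_update_of_ne (x : ι → ℝ) {i j : ι} (hij : i ≠ j) (t : ℝ) :
    RS_V f (update x i t) j = f (x j - t) * ∏ k ∈ (univ.erase j).erase i, f (x j - x k) := by
  rw [RS_V, ← mul_prod_erase _ _ (mem_erase.2 ⟨hij, mem_univ i⟩), update_self,
    update_of_ne hij.symm]
  congr 1
  exact prod_congr rfl fun k hk => by rw [update_of_ne (ne_of_mem_erase hk)]

variable {f}

theorem differentiableAt_RS_V_update (hf : ∀ u, u ≠ 0 → DifferentiableAt ℝ f u)
    {x : ι → ℝ} (hx : Injective x) (i j : ι) :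
    DifferentiableAt ℝ (fun t => RS_V f (update x i t) j) (x i) := by
  refine DifferentiableAt.fun_finsetProd fun k hk => ?_
  have hjk : x j - x k ≠ 0 := sub_ne_zero.2 (hx.ne (ne_of_mem_erase hk).symm)
  refine DifferentiableAt.comp (x i) ?_ ?_
  · simpa using hf _ hjk
  · exact (hasDerivAt_update_apply x i j).differentiableAt.sub
      (hasDerivAt_update_apply x i k).differentiableAt

theorem RS_dV_of_ne {x : ι → ℝ} {i j : ι} (hij : i ≠ j)
    (hf : DifferentiableAt ℝ f (x j - x i)) :
    RS_dV f x i j = -deriv f (x j - x i) * ∏ k ∈ (univ.erase j).erase i, f (x j - x k) := by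
  have h : HasDerivAt (fun t => f (x j - t)) (deriv f (x j - x i) * (0 - 1)) (x i) :=
    hf.hasDerivAt.comp (x i) ((hasDerivAt_const _ _).sub (hasDerivAt_id _))
  rw [RS_dV]
  simp_rw [RS_V_update_of_ne f x hij]
  rw [(h.mul_const _).deriv]
  ring

theorem RS_V_mul_RS_dV_antisymm
    (hpar : (∀ x, x ≠ 0 → f (-x) = f x) ∨ (∀ x, x ≠ 0 → f (-x) = -f x))
    (hf : ∀ u, u ≠ 0 → DifferentiableAt ℝ f u) {x : ι → ℝ} (hx : Injective x) {i j : ι}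
    (hij : i ≠ j) :
    RS_V f x i * RS_dV f x i j + RS_V f x j * RS_dV f x j i = 0 := by
  have hu : x i - x j ≠ 0 := sub_ne_zero.2 (hx.ne hij)
  have hji : x j - x i = -(x i - x j) := (neg_sub _ _).symm
  have hVi := RS_V_update_of_ne f x hij.symm (x j)
  have hVj := RS_V_update_of_ne f x hij (x i)
  rw [update_eq_self] at hVi hVj
  rw [RS_dV_of_ne hij (hf _ (hji ▸ neg_ne_zero.2 hu)), RS_dV_of_ne hij.symm (hf _ hu), hVi, hVj,
    hji]
  linear_combination (-(∏ k ∈ (univ.erase i).erase j, f (x i - x k)) *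
    ∏ k ∈ (univ.erase j).erase i, f (x j - x k)) * mul_deriv_neg_add_mul_deriv_eq_zero hpar hu

theorem deriv_sum_mul_RS_V_update (hf : ∀ u, u ≠ 0 → DifferentiableAt ℝ f u) {x : ι → ℝ}
    (hx : Injective x) (c : ι → ℝ) (i : ι) :
    deriv (fun t => ∑ j, c j * RS_V f (update x i t) j) (x i) = ∑ j, c j * RS_dV f x i j := by
  rw [deriv_fun_sum fun j _ => (differentiableAt_RS_V_update hf hx i j).const_mul (c j)]
  exact sum_congr rfl fun j _ => deriv_const_mul _ (differentiableAt_RS_V_update hf hx i j)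

theorem sum_deriv_sq_mul_prod_sq_eq (hf : ∀ u, u ≠ 0 → DifferentiableAt ℝ f u) {x : ι → ℝ}
    (hx : Injective x) (j : ι) :
    ∑ k ∈ univ.erase j, deriv (fun t => f t ^ 2) (x j - x k) *
        ∏ l ∈ (univ.erase j).erase k, f (x j - x l) ^ 2
      = 2 * (RS_V f x j * RS_dV f x j j) := by
  have hprod : HasDerivAt (fun t => ∏ k ∈ univ.erase j, f (t - x k) ^ 2)
      (∑ k ∈ univ.erase j, deriv (fun t => f t ^ 2) (x j - x k) *
        ∏ l ∈ (univ.erase j).erase k, f (x j - x l) ^ 2) (x j) := by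
    refine (HasDerivAt.fun_finsetProd fun k hk => ?_).congr_deriv
      (sum_congr rfl fun k _ => by rw [smul_eq_mul, mul_comm])
    have hjk : x j - x k ≠ 0 := sub_ne_zero.2 (hx.ne (ne_of_mem_erase hk).symm)
    exact ((hf _ hjk).fun_pow 2).hasDerivAt.comp_sub_const (x j) (x k)
  have hsq : (fun t => ∏ k ∈ univ.erase j, f (t - x k) ^ 2)
      = fun t => RS_V f (update x j t) j ^ 2 := by
    funext t
    rw [RS_V_update_self, prod_pow]
  rw [← hprod.deriv, hsq, ((differentiableAt_RS_V_update hf hx j j).hasDerivAt.fun_pow 2).deriv,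
    update_eq_self, RS_dV]
  ring

end Weights

section Brackets

variable {n : ℕ} (f : ℝ → ℝ)

theorem RS_H_eq_sum_RS_V (x p : Fin n → ℝ) :
    RS_H f x p = ∑ j, Real.cosh (p j) * RS_V f x j := rfl

theorem RS_P_eq_sum_RS_V (x p : Fin n → ℝ) :
    RS_P f x p = ∑ j, Real.sinh (p j) * RS_V f x j := rfl

theorem pbrack_RS_H_RS_B (x p : Fin n → ℝ) : pbrack (RS_H f) RS_B x p = RS_P f x p := by
  simp only [pbrack, RS_H_eq_sum_RS_V, RS_P_eq_sum_RS_V, RS_B]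
  refine sum_congr rfl fun i _ => ?_
  rw [deriv_sum_comp_update_mul Real.hasDerivAt_cosh, deriv_sum_update, deriv_const]
  ring

theorem pbrack_RS_P_RS_B (x p : Fin n → ℝ) : pbrack (RS_P f) RS_B x p = RS_H f x p := by
  simp only [pbrack, RS_H_eq_sum_RS_V, RS_P_eq_sum_RS_V, RS_B]
  refine sum_congr rfl fun i _ => ?_
  rw [deriv_sum_comp_update_mul Real.hasDerivAt_sinh, deriv_sum_update, deriv_const]
  ring

variable {f}

theorem pbrack_RS_H_RS_P (hpar : (∀ x, x ≠ 0 → f (-x) = f x) ∨ (∀ x, x ≠ 0 → f (-x) = -f x))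
    (hf : ∀ u, u ≠ 0 → DifferentiableAt ℝ f u) {x : Fin n → ℝ} (hx : Injective x)
    (p : Fin n → ℝ) :
    pbrack (RS_H f) (RS_P f) x p = -∑ i, RS_V f x i * RS_dV f x i i := by
  have hdiag := sum_sum_mul_eq_sum_diag (fun i j => Real.cosh (p i - p j))
    (fun i j => RS_V f x i * RS_dV f x i j)
    (fun i j => by rw [← Real.cosh_neg, neg_sub])
    (fun i j hij => RS_V_mul_RS_dV_antisymm hpar hf hx hij)
  simp only [sub_self, Real.cosh_zero, one_mul] at hdiag
  rw [← hdiag, ← sum_neg_distrib]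
  simp only [pbrack, RS_H_eq_sum_RS_V, RS_P_eq_sum_RS_V]
  refine sum_congr rfl fun i _ => ?_
  rw [deriv_sum_comp_update_mul Real.hasDerivAt_cosh,
    deriv_sum_comp_update_mul Real.hasDerivAt_sinh, deriv_sum_mul_RS_V_update hf hx,
    deriv_sum_mul_RS_V_update hf hx, mul_sum, sum_mul,
    ← sum_sub_distrib, ← sum_neg_distrib]
  refine sum_congr rfl fun j _ => ?_
  rw [Real.cosh_sub]
  ring

end Brackets

theorem stmt_1_general (n : ℕ) (f : ℝ → ℝ)
    (hf : ∀ x : ℝ, x ≠ 0 → ContDiffAt ℝ 1 f x)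
    (hpar : (∀ x : ℝ, x ≠ 0 → f (-x) = f x) ∨ (∀ x : ℝ, x ≠ 0 → f (-x) = -f x)) :
    (∀ x p : Fin n → ℝ, Function.Injective x →
        pbrack (RS_H f) RS_B x p = RS_P f x p) ∧
    (∀ x p : Fin n → ℝ, Function.Injective x →
        pbrack (RS_P f) RS_B x p = RS_H f x p) ∧
    ((∀ x p : Fin n → ℝ, Function.Injective x →
        pbrack (RS_H f) (RS_P f) x p = 0) ↔
      (∀ x : Fin n → ℝ, Function.Injective x →
        ∑ j : Fin n, ∑ k ∈ univ.erase j,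
          deriv (fun t => (f t) ^ 2) (x j - x k) *
            ∏ l ∈ (univ.erase j).erase k, (f (x j - x l)) ^ 2 = 0)) := by
  have hdiff : ∀ u, u ≠ 0 → DifferentiableAt ℝ f u := fun u hu =>
    (hf u hu).differentiableAt one_ne_zero
  have hbracket : ∀ x p : Fin n → ℝ, Injective x →
      pbrack (RS_H f) (RS_P f) x p = -(1 / 2) * ∑ j : Fin n, ∑ k ∈ univ.erase j,
          deriv (fun t => (f t) ^ 2) (x j - x k) *
            ∏ l ∈ (univ.erase j).erase k, (f (x j - x l)) ^ 2 := by
    intro x p hx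
    simp only [sum_deriv_sq_mul_prod_sq_eq hdiff hx, ← mul_sum, pbrack_RS_H_RS_P hpar hdiff hx]
    ring
  refine ⟨fun x p _ => pbrack_RS_H_RS_B f x p, fun x p _ => pbrack_RS_P_RS_B f x p,
    ⟨fun h x hx => ?_, fun h x p hx => ?_⟩⟩
  · linarith [hbracket x 0 hx, h x 0 hx]
  · rw [hbracket x p hx, h x hx, mul_zero]

/-- the Ruijsenaars–Schneider ansatz realizes `{H,B}=P`, `{P,B}=H`,
and `{H,P}=0` holds identically iff the functional equation
`∑ⱼ ∂ⱼ ∏_{k≠j} f²(xⱼ−x_k) = 0` holds on all pairwise-distinct configurations. -/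
theorem stmt_1 (n : ℕ) (hn : 2 ≤ n) (f : ℝ → ℝ)
    (hf : ∀ x : ℝ, x ≠ 0 → ContDiffAt ℝ 1 f x)
    (hpar : (∀ x : ℝ, x ≠ 0 → f (-x) = f x) ∨ (∀ x : ℝ, x ≠ 0 → f (-x) = -f x)) :
    (∀ x p : Fin n → ℝ, Function.Injective x →
        pbrack (RS_H f) RS_B x p = RS_P f x p) ∧
    (∀ x p : Fin n → ℝ, Function.Injective x →
        pbrack (RS_P f) RS_B x p = RS_H f x p) ∧
    ((∀ x p : Fin n → ℝ, Function.Injective x →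
        pbrack (RS_H f) (RS_P f) x p = 0) ↔
      (∀ x : Fin n → ℝ, Function.Injective x →
        ∑ j : Fin n, ∑ k ∈ univ.erase j,
          deriv (fun t => (f t) ^ 2) (x j - x k) *
            ∏ l ∈ (univ.erase j).erase k, (f (x j - x l)) ^ 2 = 0)) :=
  stmt_1_general n f hf hpar
end

section
/- For any constant c ∈ ℂ, the function F(z) = c + 1/sin²(z) satisfies the functional equation: for all complex x, y, z with x + y + z = 0 and sin(x) ≠ 0, sin(y) ≠ 0, sin(z) ≠ 0, the determinant of the 3×3 matrix with rows (1, 1, 1), (F(x), F(y), F(z)), (F'(x), F'(y), F'(z)) vanishes. -/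
/-!
Write `a, b, d` for the cotangents of `x, y, z`. Then `F = c + 1 + cot²` and
`F' = -2 cot (1 + cot²)`, so the determinant is a polynomial in `a, b, d`; it equals
`-2 (b - a)(d - a)(d - b)(ab + bd + da - 1)`, and the cotangent addition formula gives
`ab + bd + da = 1` when `x + y + z = 0`.
-/

theorem Matrix.det_eq_zero_of_mul_add_mul_add_mul_eq_one {R : Type*} [CommRing R]
    (k a b d : R) (h : a * b + b * d + d * a = 1) :
    Matrix.det !![(1 : R), 1, 1;
        k + a ^ 2, k + b ^ 2, k + d ^ 2;
        -2 * a * (1 + a ^ 2), -2 * b * (1 + b ^ 2), -2 * d * (1 + d ^ 2)] = 0 := by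
  simp only [Matrix.det_fin_three, Matrix.of_apply, Matrix.cons_val', Matrix.cons_val_zero,
    Matrix.cons_val_fin_one, Matrix.cons_val_one, Matrix.cons_val]
  linear_combination (-2 * (b - a) * (d - a) * (d - b)) * h

namespace Complex

theorem one_div_sin_sq_eq_one_add_cot_sq {w : ℂ} (hw : sin w ≠ 0) :
    1 / sin w ^ 2 = 1 + cot w ^ 2 := by
  rw [cot_eq_cos_div_sin]
  field_simp
  exact (sin_sq_add_cos_sq w).symm

theorem hasDerivAt_const_add_one_div_sin_sq (c : ℂ) {w : ℂ} (hw : sin w ≠ 0) :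
    HasDerivAt (fun u => c + 1 / sin u ^ 2) (-2 * cot w * (1 + cot w ^ 2)) w := by
  have h := (((hasDerivAt_sin w).fun_pow 2).fun_inv (pow_ne_zero 2 hw)).const_add c
  simp only [← one_div] at h
  refine h.congr_deriv ?_
  norm_num
  rw [cot_eq_cos_div_sin]
  field_simp
  rw [sin_sq_add_cos_sq, mul_one]

theorem cot_mul_cot_add_cot_mul_cot_add_cot_mul_cot_eq_one {x y z : ℂ} (hsum : x + y + z = 0)
    (hx : sin x ≠ 0) (hy : sin y ≠ 0) (hz : sin z ≠ 0) :
    cot x * cot y + cot y * cot z + cot z * cot x = 1 := by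
  have hz_eq : z = -(x + y) := by linear_combination hsum
  have hsin_z : sin z = -(sin x * cos y + cos x * sin y) := by
    rw [hz_eq, sin_neg, sin_add]
  have hcos_z : cos z = cos x * cos y - sin x * sin y := by
    rw [hz_eq, cos_neg, cos_add]
  simp only [cot_eq_cos_div_sin]
  field_simp
  rw [hsin_z, hcos_z]
  ring

end Complex

/-- `F(z) = c + 1/sin²(z)` satisfies the determinantal functional
equation `det [[1,1,1],[F(x),F(y),F(z)],[F'(x),F'(y),F'(z)]] = 0` whenever
`x + y + z = 0` and the sines are nonzero. -/
theorem stmt_3 (c : ℂ) :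
    ∀ x y z : ℂ, x + y + z = 0 →
      Complex.sin x ≠ 0 → Complex.sin y ≠ 0 → Complex.sin z ≠ 0 →
      Matrix.det !![(1 : ℂ), 1, 1;
                    c + 1 / Complex.sin x ^ 2,
                      c + 1 / Complex.sin y ^ 2,
                      c + 1 / Complex.sin z ^ 2;
                    deriv (fun w => c + 1 / Complex.sin w ^ 2) x,
                      deriv (fun w => c + 1 / Complex.sin w ^ 2) y,
                      deriv (fun w => c + 1 / Complex.sin w ^ 2) z] = 0 := by
  intro x y z hsum hx hy hz
  rw [(Complex.hasDerivAt_const_add_one_div_sin_sq c hx).deriv,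
    (Complex.hasDerivAt_const_add_one_div_sin_sq c hy).deriv,
    (Complex.hasDerivAt_const_add_one_div_sin_sq c hz).deriv,
    Complex.one_div_sin_sq_eq_one_add_cot_sq hx, Complex.one_div_sin_sq_eq_one_add_cot_sq hy,
    Complex.one_div_sin_sq_eq_one_add_cot_sq hz, ← add_assoc, ← add_assoc, ← add_assoc]
  exact Matrix.det_eq_zero_of_mul_add_mul_add_mul_eq_one _ _ _ _
    (Complex.cot_mul_cot_add_cot_mul_cot_add_cot_mul_cot_eq_one hsum hx hy hz)
end

section
/- Fix n ≥ 2 and c ∈ ℝ, and let F(x) = c + 1/sinh²(x). For all pairwise distinct real numbers x₁, …, xₙ, one has Σ_{j=1}^n Σ_{k≠j} F'(x_j - x_k) Π_{l≠j,l≠k} F(x_j - x_l) = 0. -/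
/-!
Put `z = exp (2 x)`. Then `1 / sinh² (x_j - x_l) = 4 z_j z_l / (z_j - z_l)²`, so the inner sum over
`k` is `2 z_j G_j'(z_j)` with `G_j(t) = ∏_{l ≠ j} (c + 4 t z_l / (t - z_l)²)`. The full product
`∏_l (c + 4 t z_l / (t - z_l)²)` equals `N(t) / P(t)²` with `N = ∏_l (c (X - z_l)² + 4 z_l X)` and
`P = ∏_l (X - z_l)`, and `4 z_j G_j'(z_j)` is the residue of `N / (X P²)` at `z_j`. The residue at
`0` is `N(0) / P(0)² = cⁿ`, the residue at infinity is minus the leading coefficient `cⁿ` of `N`,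
and the residues of a rational function sum to zero.
-/

open Finset Polynomial Lagrange Function Filter Topology Real

section PartialFractions

variable {K : Type*} [Field K]

theorem sq_X_sub_C_dvd_of_eval_derivative {R : Type*} [CommRing R] {p : R[X]} {a : R}
    (h : p.eval a = 0) (h' : p.derivative.eval a = 0) : (X - C a) ^ 2 ∣ p := by
  obtain ⟨q, rfl⟩ := dvd_iff_isRoot.2 h
  have hq : q.eval a = 0 := by simpa [derivative_mul] using h'
  obtain ⟨r, rfl⟩ := dvd_iff_isRoot.2 hq
  exact ⟨r, by ring⟩

/-- The residue at `a` of `N / ((X - a) ^ 2 * q)`, i.e. the derivative of `N / q` at `a`. -/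
noncomputable def doublePoleResidue (N q : K[X]) (a : K) : K :=
  (N.derivative.eval a * q.eval a - N.eval a * q.derivative.eval a) / q.eval a ^ 2

theorem sq_X_sub_C_dvd_sub_doublePoleResidue (N q : K[X]) {a : K} (hq : q.eval a ≠ 0) :
    (X - C a) ^ 2 ∣
      N - (C (N.eval a / q.eval a) + C (doublePoleResidue N q a) * (X - C a)) * q := by
  apply sq_X_sub_C_dvd_of_eval_derivative
  · simp [hq]
  · simp only [doublePoleResidue, derivative_sub, derivative_mul, derivative_add, derivative_C,
      derivative_X, eval_sub, eval_add, eval_mul, eval_C, eval_X, eval_zero, eval_one]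
    field_simp
    ring

variable {ι : Type*} [Fintype ι] [DecidableEq ι]

noncomputable def puncturedDenom (z : ι → K) (j : ι) : K[X] := X * nodal (univ.erase j) z ^ 2

/-- `N / (X * nodal univ z ^ 2)`, expanded into partial fractions and multiplied back by the
denominator. -/
noncomputable def partialFractionSum (N : K[X]) (z : ι → K) : K[X] :=
  C (N.eval 0 / (nodal univ z).eval 0 ^ 2) * nodal univ z ^ 2 +
    ∑ j, (C (N.eval (z j) / (puncturedDenom z j).eval (z j)) +
      C (doublePoleResidue N (puncturedDenom z j) (z j)) * (X - C (z j))) * puncturedDenom z j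

theorem eval_puncturedDenom_self_ne_zero {z : ι → K} (hz : Injective z) (h0 : ∀ i, z i ≠ 0)
    (j : ι) : (puncturedDenom z j).eval (z j) ≠ 0 := by
  rw [puncturedDenom, eval_mul, eval_pow, eval_X]
  refine mul_ne_zero (h0 j) (pow_ne_zero _ (eval_nodal_not_at_node fun i hi => ?_))
  exact hz.ne (mem_erase.1 hi).1.symm

theorem natDegree_puncturedDenom (z : ι → K) (j : ι) :
    (puncturedDenom z j).natDegree = 2 * Fintype.card ι - 1 := by
  have : 1 ≤ Fintype.card ι := Fintype.card_pos_iff.2 ⟨j⟩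
  rw [puncturedDenom, monic_X.natDegree_mul (nodal_monic.pow 2), nodal_monic.natDegree_pow,
    natDegree_nodal, card_erase_of_mem (mem_univ j), card_univ, natDegree_X]
  omega

theorem monic_puncturedDenom (z : ι → K) (j : ι) : (puncturedDenom z j).Monic :=
  monic_X.mul (nodal_monic.pow 2)

theorem natDegree_partialFractionSum_le (N : K[X]) (z : ι → K) :
    (partialFractionSum N z).natDegree ≤ 2 * Fintype.card ι := by
  refine natDegree_add_le_of_degree_le ?_ (natDegree_sum_le_of_forall_le _ _ fun j _ => ?_)
  · refine (natDegree_C_mul_le _ _).trans ?_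
    rw [nodal_monic.natDegree_pow, natDegree_nodal, card_univ, mul_comm]
  · have hlin : (C (N.eval (z j) / (puncturedDenom z j).eval (z j)) +
        C (doublePoleResidue N (puncturedDenom z j) (z j)) * (X - C (z j))).natDegree ≤ 1 := by
      compute_degree
    have := Fintype.card_pos_iff.2 ⟨j⟩
    refine natDegree_mul_le.trans ?_
    rw [natDegree_puncturedDenom]
    omega

theorem sq_X_sub_C_dvd_sub_partialFractionSum {z : ι → K} (hz : Injective z)
    (h0 : ∀ i, z i ≠ 0) (N : K[X]) (j : ι) : (X - C (z j)) ^ 2 ∣ N - partialFractionSum N z := by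
  have hother : (X - C (z j)) ^ 2 ∣ ∑ i ∈ univ.erase j,
      (C (N.eval (z i) / (puncturedDenom z i).eval (z i)) +
        C (doublePoleResidue N (puncturedDenom z i) (z i)) * (X - C (z i))) * puncturedDenom z i :=
    dvd_sum fun i hi => Dvd.dvd.mul_left (Dvd.dvd.mul_left (pow_dvd_pow_of_dvd
      (X_sub_C_dvd_nodal z (mem_erase.2 ⟨(mem_erase.1 hi).1.symm, mem_univ j⟩)) 2) _) _
  have hP : (X - C (z j)) ^ 2 ∣ nodal univ z ^ 2 :=
    pow_dvd_pow_of_dvd (X_sub_C_dvd_nodal z (mem_univ j)) 2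
  have hj := sq_X_sub_C_dvd_sub_doublePoleResidue N (puncturedDenom z j)
    (eval_puncturedDenom_self_ne_zero hz h0 j)
  rw [partialFractionSum, ← add_sum_erase _ _ (mem_univ j),
    show ∀ a b c : K[X], N - (a + (b + c)) = N - b - a - c from fun _ _ _ => by ring]
  exact (hj.sub (dvd_mul_of_dvd_right hP _)).sub hother

theorem X_dvd_sub_partialFractionSum {z : ι → K} (h0 : ∀ i, z i ≠ 0) (N : K[X]) :
    X ∣ N - partialFractionSum N z := by
  have hP : (nodal univ z).eval 0 ≠ 0 := eval_nodal_not_at_node fun i _ => (h0 i).symm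
  rw [X_dvd_iff, coeff_zero_eq_eval_zero]
  simp [partialFractionSum, puncturedDenom, eval_finsetSum, hP]

theorem X_mul_nodal_sq_dvd_sub_partialFractionSum {z : ι → K} (hz : Injective z)
    (h0 : ∀ i, z i ≠ 0) (N : K[X]) : X * nodal univ z ^ 2 ∣ N - partialFractionSum N z := by
  have hcop : IsCoprime (X : K[X]) (nodal univ z ^ 2) := by
    refine IsCoprime.pow_right (IsCoprime.prod_right fun i _ => ?_)
    simpa using isCoprime_X_sub_C_of_isUnit_sub (R := K) (a := 0)
      (isUnit_iff_ne_zero.2 (by simpa using h0 i))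
  refine hcop.mul_dvd (X_dvd_sub_partialFractionSum h0 N) ?_
  rw [nodal, ← prod_pow]
  exact prod_dvd_of_coprime (fun i _ k _ hik => (pairwise_coprime_X_sub_C hz hik).pow)
    fun j _ => sq_X_sub_C_dvd_sub_partialFractionSum hz h0 N j

theorem eq_partialFractionSum {z : ι → K} (hz : Injective z) (h0 : ∀ i, z i ≠ 0) {N : K[X]}
    (hN : N.natDegree ≤ 2 * Fintype.card ι) : N = partialFractionSum N z := by
  refine sub_eq_zero.1 (eq_zero_of_dvd_of_natDegree_lt
    (X_mul_nodal_sq_dvd_sub_partialFractionSum hz h0 N) ?_)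
  rw [monic_X.natDegree_mul (nodal_monic.pow 2), nodal_monic.natDegree_pow, natDegree_nodal,
    natDegree_X, card_univ]
  exact (natDegree_sub_le _ _).trans_lt
    (by have := natDegree_partialFractionSum_le N z; omega)

theorem coeff_partialFractionSum (N : K[X]) (z : ι → K) :
    (partialFractionSum N z).coeff (2 * Fintype.card ι) =
      N.eval 0 / (nodal univ z).eval 0 ^ 2 +
        ∑ j, doublePoleResidue N (puncturedDenom z j) (z j) := by
  have hP : (nodal univ z ^ 2).coeff (2 * Fintype.card ι) = 1 := by
    simpa [nodal_monic.natDegree_pow, mul_comm] using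
      ((nodal_monic (s := univ) (v := z)).pow 2).coeff_natDegree
  rw [partialFractionSum, coeff_add, coeff_C_mul, hP, mul_one, finsetSum_coeff]
  congr 1
  refine sum_congr rfl fun j _ => ?_
  have hq := natDegree_puncturedDenom z j
  have := Fintype.card_pos_iff.2 ⟨j⟩
  have hlead : ((X - C (z j)) * puncturedDenom z j).coeff (2 * Fintype.card ι) = 1 := by
    have hdeg : ((X - C (z j)) * puncturedDenom z j).natDegree = 2 * Fintype.card ι := by
      rw [(monic_X_sub_C _).natDegree_mul (monic_puncturedDenom z j), hq, natDegree_X_sub_C]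
      omega
    simpa [hdeg] using ((monic_X_sub_C (z j)).mul (monic_puncturedDenom z j)).coeff_natDegree
  rw [add_mul, mul_assoc, coeff_add, coeff_C_mul, coeff_C_mul, hlead,
    coeff_eq_zero_of_natDegree_lt (by omega), mul_zero, zero_add, mul_one]

theorem coeff_eq_add_sum_doublePoleResidue {z : ι → K} (hz : Injective z) (h0 : ∀ i, z i ≠ 0)
    {N : K[X]} (hN : N.natDegree ≤ 2 * Fintype.card ι) :
    N.coeff (2 * Fintype.card ι) =
      N.eval 0 / (nodal univ z).eval 0 ^ 2 +
        ∑ j, doublePoleResidue N (puncturedDenom z j) (z j) := by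
  conv_lhs => rw [eq_partialFractionSum hz h0 hN]
  exact coeff_partialFractionSum N z

end PartialFractions

section RSNumerator

variable {K : Type*} [Field K] {ι : Type*} [Fintype ι]

/-- Away from the nodes,
`∏ l, rsFactor c (z l) t = (rsNumerator c z).eval t / (nodal univ z).eval t ^ 2`. -/
noncomputable def rsNumerator (c : K) (z : ι → K) : K[X] :=
  ∏ l, (C c * (X - C (z l)) ^ 2 + C (4 * z l) * X)

theorem natDegree_rsNumerator_le (c : K) (z : ι → K) :
    (rsNumerator c z).natDegree ≤ 2 * Fintype.card ι := by
  have hquad (l : ι) : (C c * (X - C (z l)) ^ 2 + C (4 * z l) * X).natDegree ≤ 2 := by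
    compute_degree
  refine (natDegree_prod_le _ _).trans ?_
  simpa [mul_comm] using sum_le_sum fun l (_ : l ∈ univ) => hquad l

theorem coeff_rsNumerator (c : K) (z : ι → K) :
    (rsNumerator c z).coeff (2 * Fintype.card ι) = c ^ Fintype.card ι := by
  have hsq (a : K) : ((X - C a) ^ 2).coeff 2 = 1 := by
    simpa using ((monic_X_sub_C a).pow 2).coeff_natDegree
  rw [rsNumerator, mul_comm, ← card_univ,
    coeff_prod_of_natDegree_le (f := fun l => C c * (X - C (z l)) ^ 2 + C (4 * z l) * X)
      (n := 2) (h := fun l _ => by compute_degree)]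
  simp [hsq]

theorem eval_zero_rsNumerator (c : K) (z : ι → K) :
    (rsNumerator c z).eval 0 = c ^ Fintype.card ι * (nodal univ z).eval 0 ^ 2 := by
  simp [rsNumerator, eval_prod, eval_nodal, ← prod_pow, prod_mul_distrib]

end RSNumerator

section Analysis

variable {𝕜 : Type*} [NontriviallyNormedField 𝕜] {ι : Type*}

theorem hasDerivAt_prod_comp_sub [DecidableEq ι] {F : 𝕜 → 𝕜} {s : Finset ι} {x : ι → 𝕜}
    {y : 𝕜} (hF : ∀ k ∈ s, DifferentiableAt 𝕜 F (y - x k)) :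
    HasDerivAt (fun t => ∏ l ∈ s, F (t - x l))
      (∑ k ∈ s, deriv F (y - x k) * ∏ l ∈ s.erase k, F (y - x l)) y := by
  refine (HasDerivAt.fun_finsetProd fun k hk =>
    (hF k hk).hasDerivAt.comp_sub_const y (x k)).congr_deriv (sum_congr rfl fun k _ => ?_)
  rw [smul_eq_mul, mul_comm]

theorem deriv_eval_div_eval (p q : 𝕜[X]) {a : 𝕜} (hq : q.eval a ≠ 0) :
    deriv (fun t => p.eval t / q.eval t) a = doublePoleResidue p q a :=
  ((p.hasDerivAt a).div (q.hasDerivAt a) hq).deriv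

/-- `c + 1 / sinh (x - y) ^ 2` in the coordinates `t = exp (2 * x)`, `w = exp (2 * y)`. -/
def rsFactor (c w t : 𝕜) : 𝕜 := c + 4 * t * w / (t - w) ^ 2

theorem differentiableAt_prod_rsFactor (c : 𝕜) {s : Finset ι} {z : ι → 𝕜} {t : 𝕜}
    (ht : ∀ l ∈ s, t ≠ z l) : DifferentiableAt 𝕜 (fun t => ∏ l ∈ s, rsFactor c (z l) t) t :=
  DifferentiableAt.fun_finsetProd fun l hl => by
    unfold rsFactor
    have := sub_ne_zero.2 (ht l hl)
    fun_prop (disch := exact pow_ne_zero _ this)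

variable [Fintype ι] [DecidableEq ι]

theorem rsNumerator_div_eventuallyEq (c : 𝕜) {z : ι → 𝕜} (hz : Injective z)
    (h0 : ∀ i, z i ≠ 0) (j : ι) :
    (fun t => (rsNumerator c z).eval t / (puncturedDenom z j).eval t) =ᶠ[𝓝 (z j)]
      fun t => (c * (t - z j) ^ 2 / t + 4 * z j) * ∏ l ∈ univ.erase j, rsFactor c (z l) t := by
  have hnear : ∀ᶠ t in 𝓝 (z j), t ≠ 0 ∧ ∀ l ∈ univ.erase j, t ≠ z l :=
    (eventually_ne_nhds (h0 j)).and ((eventually_all_finset _).2 fun l hl =>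
      eventually_ne_nhds (hz.ne (mem_erase.1 hl).1.symm))
  filter_upwards [hnear] with t ⟨ht0, ht⟩
  rw [rsNumerator, eval_prod, ← mul_prod_erase _ _ (mem_univ j), puncturedDenom, eval_mul,
    eval_pow, eval_nodal, eval_X, ← prod_pow, mul_div_mul_comm, ← prod_div_distrib]
  congr 1
  · simp only [eval_add, eval_mul, eval_C, eval_pow, eval_sub, eval_X]
    field_simp
  · refine prod_congr rfl fun l hl => ?_
    have := sub_ne_zero.2 (ht l hl)
    simp only [rsFactor, eval_add, eval_mul, eval_C, eval_pow, eval_sub, eval_X]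
    field_simp

theorem doublePoleResidue_rsNumerator (c : 𝕜) {z : ι → 𝕜} (hz : Injective z)
    (h0 : ∀ i, z i ≠ 0) (j : ι) :
    doublePoleResidue (rsNumerator c z) (puncturedDenom z j) (z j) =
      4 * z j * deriv (fun t => ∏ l ∈ univ.erase j, rsFactor c (z l) t) (z j) := by
  have hG := (differentiableAt_prod_rsFactor c (s := univ.erase j) (z := z) (t := z j)
    fun l hl => hz.ne (mem_erase.1 hl).1.symm).hasDerivAt
  have hE : HasDerivAt (fun t => c * (t - z j) ^ 2 / t + 4 * z j) 0 (z j) := by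
    simpa using ((((hasDerivAt_id (z j)).sub_const (z j)).pow 2).const_mul c).div
      (hasDerivAt_id (z j)) (h0 j) |>.add_const (4 * z j)
  rw [← deriv_eval_div_eval _ _ (eval_puncturedDenom_self_ne_zero hz h0 j),
    ((hE.mul hG).congr_of_eventuallyEq (rsNumerator_div_eventuallyEq c hz h0 j)).deriv]
  simp

theorem sum_mul_deriv_prod_rsFactor [CharZero 𝕜] (c : 𝕜) {z : ι → 𝕜} (hz : Injective z)
    (h0 : ∀ i, z i ≠ 0) :
    ∑ j, z j * deriv (fun t => ∏ l ∈ univ.erase j, rsFactor c (z l) t) (z j) = 0 := by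
  have hsum := coeff_eq_add_sum_doublePoleResidue hz h0 (natDegree_rsNumerator_le c z)
  have hP : (nodal univ z).eval 0 ≠ 0 := eval_nodal_not_at_node fun i _ => (h0 i).symm
  simp only [coeff_rsNumerator, eval_zero_rsNumerator, doublePoleResidue_rsNumerator c hz h0,
    mul_div_assoc, div_self (pow_ne_zero 2 hP), mul_one] at hsum
  have hfour : (4 : 𝕜) *
      ∑ j, z j * deriv (fun t => ∏ l ∈ univ.erase j, rsFactor c (z l) t) (z j) = 0 := by
    simpa only [mul_sum, mul_assoc] using add_eq_left.1 hsum.symm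
  exact (mul_eq_zero.1 hfour).resolve_left (by norm_num)

end Analysis

theorem one_div_sinh_sub_sq (a b : ℝ) :
    1 / sinh (a - b) ^ 2 = 4 * exp (2 * a) * exp (2 * b) / (exp (2 * a) - exp (2 * b)) ^ 2 := by
  have hsinh : sinh (a - b) = (exp (2 * a) - exp (2 * b)) / (2 * exp (a + b)) := by
    rw [sinh_eq, eq_div_iff (by positivity), div_mul_eq_mul_div, mul_left_comm,
      mul_div_cancel_left₀ _ two_ne_zero, sub_mul, ← exp_add, ← exp_add]
    ring_nf
  have hexp : (2 * exp (a + b)) ^ 2 = 4 * exp (2 * a) * exp (2 * b) := by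
    rw [mul_pow, ← exp_nat_mul, mul_assoc, ← exp_add]
    push_cast
    ring_nf
  rw [hsinh, div_pow, one_div_div, hexp]

theorem differentiableAt_const_add_one_div_sinh_sq (c : ℝ) {u : ℝ} (hu : u ≠ 0) :
    DifferentiableAt ℝ (fun t => c + 1 / sinh t ^ 2) u := by
  have := sinh_ne_zero.2 hu
  fun_prop (disch := exact pow_ne_zero _ this)

theorem hasDerivAt_prod_const_add_one_div_sinh_sq {ι : Type*} (c : ℝ) {s : Finset ι}
    {x : ι → ℝ} {y : ℝ} (hy : ∀ l ∈ s, y ≠ x l) :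
    HasDerivAt (fun u => ∏ l ∈ s, (c + 1 / sinh (u - x l) ^ 2))
      (deriv (fun t => ∏ l ∈ s, rsFactor c (exp (2 * x l)) t) (exp (2 * y)) *
        (2 * exp (2 * y))) y := by
  have hcoord : (fun u => ∏ l ∈ s, (c + 1 / sinh (u - x l) ^ 2)) =
      (fun t => ∏ l ∈ s, rsFactor c (exp (2 * x l)) t) ∘ fun u => exp (2 * u) := by
    funext u
    simp only [comp_apply, rsFactor, one_div_sinh_sub_sq]
  have hexp : HasDerivAt (fun u => exp (2 * u)) (2 * exp (2 * y)) y :=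
    ((hasDerivAt_id y).const_mul 2).exp.congr_deriv (by simp [mul_comm])
  rw [hcoord]
  exact (differentiableAt_prod_rsFactor c fun l hl =>
    fun h => hy l hl (by simpa using h)).hasDerivAt.comp y hexp

theorem stmt_5_general (n : ℕ) (c : ℝ) (x : Fin n → ℝ)
    (hx : Function.Injective x) :
    ∑ j : Fin n, ∑ k ∈ univ.erase j,
      deriv (fun t => c + 1 / Real.sinh t ^ 2) (x j - x k) *
        ∏ l ∈ (univ.erase j).erase k, (c + 1 / Real.sinh (x j - x l) ^ 2) = 0 := by
  set z : Fin n → ℝ := fun i => exp (2 * x i)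
  have hz : Injective z := fun i k h => hx (by simpa [z] using h)
  have hF (j : Fin n) : ∀ k ∈ univ.erase j,
      DifferentiableAt ℝ (fun t => c + 1 / sinh t ^ 2) (x j - x k) := fun k hk =>
    differentiableAt_const_add_one_div_sinh_sq c (sub_ne_zero.2 (hx.ne (mem_erase.1 hk).1.symm))
  calc _ = ∑ j, deriv (fun s => ∏ l ∈ univ.erase j, (c + 1 / sinh (s - x l) ^ 2)) (x j) :=
        sum_congr rfl fun j _ => (hasDerivAt_prod_comp_sub (hF j)).deriv.symm
    _ = 2 * ∑ j, z j * deriv (fun t => ∏ l ∈ univ.erase j, rsFactor c (z l) t) (z j) := by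
        rw [mul_sum]
        refine sum_congr rfl fun j _ => ?_
        rw [(hasDerivAt_prod_const_add_one_div_sinh_sq c fun l hl =>
          hx.ne (mem_erase.1 hl).1.symm).deriv]
        ring
    _ = 0 := by rw [sum_mul_deriv_prod_rsFactor c hz fun i => (exp_pos _).ne', mul_zero]

/-- `F(x) = c + 1/sinh²(x)` satisfies
`∑ⱼ ∑_{k≠j} F'(xⱼ−x_k) ∏_{l≠j,k} F(xⱼ−x_l) = 0`
for every `n ≥ 2` and all pairwise distinct real `x₁, …, xₙ`. -/
theorem stmt_5 (n : ℕ) (hn : 2 ≤ n) (c : ℝ) (x : Fin n → ℝ)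
    (hx : Function.Injective x) :
    ∑ j : Fin n, ∑ k ∈ univ.erase j,
      deriv (fun t => c + 1 / Real.sinh t ^ 2) (x j - x k) *
        ∏ l ∈ (univ.erase j).erase k, (c + 1 / Real.sinh (x j - x l) ^ 2) = 0 :=
  stmt_5_general n c x hx
end

section
/- Fix n ≥ 2 and c ∈ ℝ, and let F(x) = c + 1/x². For all pairwise distinct real numbers x₁, …, xₙ, one has Σ_{j=1}^n Σ_{k≠j} F'(x_j - x_k) Π_{l≠j,l≠k} F(x_j - x_l) = 0. -/
/-!
Write `F = c + u` with `u x = 1 / x ^ 2`. Since `F' = u'`, expanding every product in powers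
of `c` turns the sum over the index set `D` into `∑_{E ⊆ D} c ^ #(D \ E) S(E)`, where `S(E)`
is the sum for `c = 0` over the points indexed by `E`; so it suffices to show `S(E) = 0`.
With the nodal weights `w j = ∏_{l ≠ j} (x j - x l)⁻¹`, the `j`-th row of `S(E)` is
`-2 (w j)² ∑_{k ≠ j} (x j - x k)⁻¹`.
Differentiating `∑ k, L k = 1` (Lagrange basis) at the node `x j` gives
`w j ∑_{k ≠ j} (x j - x k)⁻¹ = -∑_{k ≠ j} w k (x j - x k)⁻¹`, hence
`S(E) = ∑_{j ≠ k} 2 w j w k / (x j - x k)`, which vanishes by antisymmetry.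
-/

open Finset Polynomial

namespace Finset

variable {ι : Type*} [DecidableEq ι]

theorem prod_erase_eq_div₀ {G : Type*} [CommGroupWithZero G] {s : Finset ι} {f : ι → G} {a : ι}
    (ha : a ∈ s) (hfa : f a ≠ 0) : ∏ x ∈ s.erase a, f x = (∏ x ∈ s, f x) / f a := by
  rw [← mul_prod_erase s f ha, mul_div_cancel_left₀ _ hfa]

theorem sum_sum_powerset_erase {M : Type*} [AddCommMonoid M]
    (s : Finset ι) (φ : ι → Finset ι → M) :
    ∑ a ∈ s, ∑ t ∈ (s.erase a).powerset, φ a t = ∑ t ∈ s.powerset, ∑ a ∈ t, φ a (t.erase a) := by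
  have hfiber : ∀ a ∈ s, ∑ t ∈ (s.erase a).powerset, φ a t
      = ∑ t ∈ s.powerset with a ∈ t, φ a (t.erase a) := by
    intro a ha
    have hnotMem : ∀ t ∈ (s.erase a).powerset, a ∉ t := fun t ht =>
      notMem_mono (mem_powerset.mp ht) (notMem_erase a s)
    refine sum_nbij' (insert a) (erase · a) (fun t ht => ?_) (fun t ht => ?_)
      (fun t ht => erase_insert (hnotMem t ht)) (fun t ht => insert_erase (mem_filter.mp ht).2)
      (fun t ht => by rw [erase_insert (hnotMem t ht)])
    · exact mem_filter.mpr ⟨mem_powerset.mpr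
        (insert_subset ha ((mem_powerset.mp ht).trans (erase_subset a s))), mem_insert_self a t⟩
    · exact mem_powerset.mpr (erase_subset_erase a (mem_powerset.mp (mem_filter.mp ht).1))
  rw [sum_congr rfl hfiber]
  exact sum_comm' fun a t => by
    simp only [mem_filter, mem_powerset]
    exact ⟨fun h => ⟨h.2.2, h.2.1⟩, fun h => ⟨h.2 h.1, h.2, h.1⟩⟩

theorem sum_sum_erase_sum_powerset {M : Type*} [AddCommMonoid M]
    (D : Finset ι) (h : ι → ι → Finset ι → M) :
    ∑ j ∈ D, ∑ k ∈ D.erase j, ∑ A ∈ ((D.erase j).erase k).powerset, h j k A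
      = ∑ E ∈ D.powerset, ∑ j ∈ E, ∑ k ∈ E.erase j, h j k ((E.erase j).erase k) := by
  simp_rw [sum_sum_powerset_erase (D.erase _)]
  exact sum_sum_powerset_erase D fun j B => ∑ k ∈ B, h j k (B.erase k)

theorem sum_sum_erase_mul_prod_const_add {R : Type*} [CommSemiring R]
    (D : Finset ι) (f g : ι → ι → R) (c : R) :
    ∑ j ∈ D, ∑ k ∈ D.erase j, f j k * ∏ l ∈ (D.erase j).erase k, (c + g j l)
      = ∑ E ∈ D.powerset, c ^ #(D \ E) *
          ∑ j ∈ E, ∑ k ∈ E.erase j, f j k * ∏ l ∈ (E.erase j).erase k, g j l := by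
  calc _ = ∑ j ∈ D, ∑ k ∈ D.erase j, ∑ A ∈ ((D.erase j).erase k).powerset,
          f j k * ((∏ l ∈ A, g j l) * c ^ #(((D.erase j).erase k) \ A)) := by
        simp_rw [add_comm c, prod_add, prod_const, mul_sum]
    _ = _ := by
      rw [sum_sum_erase_sum_powerset]
      refine sum_congr rfl fun E _ => ?_
      simp_rw [mul_sum]
      refine sum_congr rfl fun j hj => sum_congr rfl fun k hk => ?_
      have hsdiff : (D.erase j).erase k \ (E.erase j).erase k = D \ E := by
        ext l
        simp only [mem_sdiff, mem_erase]
        constructor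
        · tauto
        · rintro ⟨hlD, hlE⟩
          exact ⟨⟨fun h => hlE (h ▸ mem_of_mem_erase hk), fun h => hlE (h ▸ hj), hlD⟩, by tauto⟩
      rw [hsdiff]
      ring

theorem sum_sum_erase_eq_zero_of_antisymm {M : Type*} [AddCommGroup M]
    (D : Finset ι) (f : ι → ι → M) (hf : ∀ j k, f k j = -f j k) :
    ∑ j ∈ D, ∑ k ∈ D.erase j, f j k = 0 := by
  rw [sum_sigma']
  refine sum_involution (fun p _ => ⟨p.2, p.1⟩)
    (fun p _ => show f p.1 p.2 + f p.2 p.1 = 0 by rw [hf, neg_add_cancel]) (fun p hp _ => ?_)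
    (fun p hp => ?_) (fun _ _ => rfl)
  · simp only [mem_sigma, mem_erase] at hp
    exact fun h => hp.2.1 (congrArg Sigma.fst h)
  · simp only [mem_sigma, mem_erase] at hp ⊢
    exact ⟨hp.2.2, Ne.symm hp.2.1, hp.1⟩

end Finset

namespace Lagrange

variable {F ι : Type*} [Field F] [DecidableEq ι] {s : Finset ι} {v : ι → F}

theorem eval_nodal_erase_of_ne {i : ι} (hi : i ∈ s) {x : F} (hx : x ≠ v i) :
    eval x (nodal (s.erase i) v) = eval x (nodal s v) / (x - v i) := by
  rw [eval_nodal, eval_nodal, prod_erase_eq_div₀ hi (sub_ne_zero_of_ne hx)]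

theorem sum_erase_nodalWeight_mul_inv_sub (hvs : Set.InjOn v s) {j : ι} (hj : j ∈ s) :
    ∑ k ∈ s.erase j, nodalWeight s v k * (v j - v k)⁻¹
      = -(nodalWeight s v j * ∑ k ∈ s.erase j, (v j - v k)⁻¹) := by
  have hne : ∀ k ∈ s.erase j, v j ≠ v k := fun k hk h =>
    (mem_erase.mp hk).1 (hvs (mem_of_mem_erase hk) hj h.symm)
  have hP : eval (v j) (nodal (s.erase j) v) ≠ 0 := by
    rw [eval_nodal, prod_ne_zero_iff]
    exact fun k hk => sub_ne_zero_of_ne (hne k hk)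
  set P := eval (v j) (nodal (s.erase j) v)
  have hderiv : ∑ k ∈ s, nodalWeight s v k * eval (v j) (derivative (nodal (s.erase k) v)) = 0 := by
    have h := congrArg (fun p => eval (v j) (derivative p)) (sum_basis hvs ⟨j, hj⟩)
    simp only [derivative_sum, eval_finsetSum, derivative_one, eval_zero] at h
    rw [← h]
    refine sum_congr rfl fun k hk => ?_
    rw [basis_eq_prod_sub_inv_mul_nodal_div hk, ← nodal_erase_eq_nodal_div hk, derivative_C_mul,
      eval_mul, eval_C]
  have hself :
      eval (v j) (derivative (nodal (s.erase j) v)) = P * ∑ k ∈ s.erase j, (v j - v k)⁻¹ := by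
    rw [derivative_nodal, eval_finsetSum, mul_sum]
    exact sum_congr rfl fun k hk => by rw [eval_nodal_erase_of_ne hk (hne k hk), div_eq_mul_inv]
  have hother : ∀ k ∈ s.erase j,
      eval (v j) (derivative (nodal (s.erase k) v)) = P * (v j - v k)⁻¹ := fun k hk => by
    have hjk : j ∈ s.erase k := mem_erase.mpr ⟨fun h => (mem_erase.mp hk).1 h.symm, hj⟩
    rw [eval_nodal_derivative_eval_node_eq hjk, erase_right_comm,
      eval_nodal_erase_of_ne hk (hne k hk), div_eq_mul_inv]
  have hrest : ∑ k ∈ s.erase j, nodalWeight s v k * eval (v j) (derivative (nodal (s.erase k) v))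
      = P * ∑ k ∈ s.erase j, nodalWeight s v k * (v j - v k)⁻¹ := by
    rw [mul_sum]
    exact sum_congr rfl fun k hk => by rw [hother k hk]; ring
  rw [← add_sum_erase _ _ hj, hself, hrest] at hderiv
  refine mul_left_cancel₀ hP ?_
  linear_combination hderiv

end Lagrange

open Lagrange in
theorem sum_sum_erase_neg_two_div_pow_three_mul_prod_eq_zero {F ι : Type*} [Field F]
    [DecidableEq ι] {D : Finset ι} {y : ι → F} (hy : Set.InjOn y D) :
    ∑ j ∈ D, ∑ k ∈ D.erase j,
      -2 / (y j - y k) ^ 3 * ∏ l ∈ (D.erase j).erase k, 1 / (y j - y l) ^ 2 = 0 := by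
  have hrow : ∀ j ∈ D, ∑ k ∈ D.erase j,
      -2 / (y j - y k) ^ 3 * ∏ l ∈ (D.erase j).erase k, 1 / (y j - y l) ^ 2
        = ∑ k ∈ D.erase j, 2 * (nodalWeight D y j * nodalWeight D y k * (y j - y k)⁻¹) := by
    intro j hj
    have hterm : ∀ k ∈ D.erase j,
        -2 / (y j - y k) ^ 3 * ∏ l ∈ (D.erase j).erase k, 1 / (y j - y l) ^ 2
          = -2 * nodalWeight D y j ^ 2 * (y j - y k)⁻¹ := by
      intro k hk
      have hjk : y j - y k ≠ 0 :=
        sub_ne_zero_of_ne fun h => (mem_erase.mp hk).1 (hy (mem_of_mem_erase hk) hj h.symm)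
      rw [prod_erase_eq_div₀ hk (by simpa using hjk), nodalWeight, ← prod_pow]
      simp only [one_div, inv_pow]
      field_simp
    calc _ = -2 * nodalWeight D y j * (nodalWeight D y j * ∑ k ∈ D.erase j, (y j - y k)⁻¹) := by
          rw [sum_congr rfl hterm, mul_sum, mul_sum]
          exact sum_congr rfl fun k _ => by ring
      _ = 2 * nodalWeight D y j * ∑ k ∈ D.erase j, nodalWeight D y k * (y j - y k)⁻¹ := by
          linear_combination (-2 * nodalWeight D y j) * sum_erase_nodalWeight_mul_inv_sub hy hj
      _ = _ := by
          rw [mul_sum]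
          exact sum_congr rfl fun k _ => by ring
  rw [sum_congr rfl hrow]
  exact sum_sum_erase_eq_zero_of_antisymm D _ fun j k => by rw [← neg_sub (y j), inv_neg]; ring

theorem deriv_const_add_one_div_sq (c : ℝ) {z : ℝ} (hz : z ≠ 0) :
    deriv (fun t => c + 1 / t ^ 2) z = -2 / z ^ 3 := by
  have h := ((hasDerivAt_pow 2 z).inv (pow_ne_zero 2 hz)).const_add c
  simp only [Pi.inv_apply, ← one_div] at h
  rw [h.deriv]
  field_simp
  ring

theorem stmt_6_general (n : ℕ) (c : ℝ) (x : Fin n → ℝ)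
    (hx : Function.Injective x) :
    ∑ j : Fin n, ∑ k ∈ univ.erase j,
      deriv (fun t => c + 1 / t ^ 2) (x j - x k) *
        ∏ l ∈ (univ.erase j).erase k, (c + 1 / (x j - x l) ^ 2) = 0 := by
  have hderiv : ∀ j, ∀ k ∈ univ.erase j,
      deriv (fun t => c + 1 / t ^ 2) (x j - x k) = -2 / (x j - x k) ^ 3 := fun j k hk =>
    deriv_const_add_one_div_sq c (sub_ne_zero_of_ne fun h => (mem_erase.mp hk).1 (hx h).symm)
  rw [sum_congr rfl fun j _ => sum_congr rfl fun k hk => by rw [hderiv j k hk],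
    sum_sum_erase_mul_prod_const_add]
  exact sum_eq_zero fun E _ => by
    rw [sum_sum_erase_neg_two_div_pow_three_mul_prod_eq_zero hx.injOn, mul_zero]

/-- `F(x) = c + 1/x²` satisfies
`∑ⱼ ∑_{k≠j} F'(xⱼ−x_k) ∏_{l≠j,k} F(xⱼ−x_l) = 0`
for every `n ≥ 2` and all pairwise distinct real `x₁, …, xₙ`. -/
theorem stmt_6 (n : ℕ) (hn : 2 ≤ n) (c : ℝ) (x : Fin n → ℝ)
    (hx : Function.Injective x) :
    ∑ j : Fin n, ∑ k ∈ univ.erase j,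
      deriv (fun t => c + 1 / t ^ 2) (x j - x k) *
        ∏ l ∈ (univ.erase j).erase k, (c + 1 / (x j - x l) ^ 2) = 0 :=
  stmt_6_general n c x hx
end

section
/- Let n ≥ 4 be even and let F(x) = cosh(x)/sinh²(x). For all pairwise distinct real numbers x₁, …, xₙ, one has Σ_{j=1}^n Σ_{k≠j} F'(x_j - x_k) Π_{l≠j,l≠k} F(x_j - x_l) = 0. -/
/-!
Put `wⱼ = exp (2 xⱼ)`. Then `F (xⱼ - xₖ) = 2 exp xⱼ exp xₖ (wⱼ + wₖ) / (wⱼ - wₖ)²` and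
`F' / F = tanh - 2 coth` is rational in `wⱼ, wₖ`. For `n = 2m + 2` the `j`-th inner sum is, up to
the factor `2ⁿ⁻¹ ∏ₗ exp xₗ` common to all `j`, the residue at `wⱼ` of
`z ^ m ∏ₖ (z + wₖ) / ∏ₖ (z - wₖ)²`: the evenness of `n` is what turns `(exp xⱼ) ^ (n - 2)` into
the integral power `wⱼ ^ m`. The numerator has degree `m + n ≤ 2n - 2`, so the residues add up to
zero. Algebraically, the numerator equals its Hermite interpolant on the double nodes `wⱼ`, whose
coefficient of `z ^ (2n - 1)` is the sum of the residues.
-/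

open Finset Polynomial

theorem Finset.sum_mul_prod_erase_eq_prod_mul_sum_div {ι K : Type*} [DecidableEq ι] [Field K]
    (s : Finset ι) (f g : ι → K) (hf : ∀ i ∈ s, f i ≠ 0) :
    ∑ i ∈ s, g i * ∏ j ∈ s.erase i, f j = (∏ i ∈ s, f i) * ∑ i ∈ s, g i / f i := by
  rw [mul_sum]
  refine sum_congr rfl fun i hi => ?_
  rw [← mul_prod_erase s f hi]
  field_simp [hf i hi]

namespace Polynomial

variable {K : Type*} [Field K]

theorem eval_derivative_prod_eq_eval_prod_mul_sum {ι : Type*} [DecidableEq ι] (s : Finset ι)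
    (f : ι → K[X]) {z : K} (hf : ∀ i ∈ s, (f i).eval z ≠ 0) :
    (derivative (∏ i ∈ s, f i)).eval z =
      (∏ i ∈ s, f i).eval z * ∑ i ∈ s, (derivative (f i)).eval z / (f i).eval z := by
  simp only [derivative_prod_finset, eval_finsetSum, eval_mul, eval_prod, mul_comm _ (eval z _)]
  exact sum_mul_prod_erase_eq_prod_mul_sum_div s _ _ hf

theorem X_sub_C_sq_dvd_of_isRoot_derivative {R : Type*} [CommRing R] {p : R[X]} {a : R}
    (h0 : p.IsRoot a) (h1 : (derivative p).IsRoot a) : (X - C a) ^ 2 ∣ p := by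
  rcases eq_or_ne p 0 with rfl | hp
  · exact dvd_zero _
  exact (le_rootMultiplicity_iff hp).1 ((one_lt_rootMultiplicity_iff_isRoot hp).2 ⟨h0, h1⟩)

theorem isRoot_sq_mul_and_isRoot_derivative {R : Type*} [CommRing R] {D : R[X]} {a : R}
    (hD : D.IsRoot a) (H : R[X]) :
    (D ^ 2 * H).IsRoot a ∧ (derivative (D ^ 2 * H)).IsRoot a := by
  rw [IsRoot.def] at hD
  constructor <;> simp [IsRoot.def, derivative_mul, derivative_sq, hD]

theorem eval_sq_mul_C_add_C_mul_X_sub_C_self {R : Type*} [CommRing R] (D : R[X]) (a α β : R) :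
    (D ^ 2 * (C α + C β * (X - C a))).eval a = D.eval a ^ 2 * α ∧
      (derivative (D ^ 2 * (C α + C β * (X - C a)))).eval a =
        2 * D.eval a * (derivative D).eval a * α + D.eval a ^ 2 * β := by
  constructor <;> simp [derivative_mul, derivative_sq]

theorem Monic.coeff_sq_mul_C_add_C_mul_X_sub_C {R : Type*} [CommRing R] [Nontrivial R]
    {D : R[X]} (hD : D.Monic) (a α β : R) :
    (D ^ 2 * (C α + C β * (X - C a))).natDegree ≤ 2 * D.natDegree + 1 ∧
      (D ^ 2 * (C α + C β * (X - C a))).coeff (2 * D.natDegree + 1) = β := by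
  have hsplit : D ^ 2 * (C α + C β * (X - C a)) = C β * (X * D ^ 2) + C (α - β * a) * D ^ 2 := by
    simp only [map_sub, map_mul]; ring
  have hdeg : (D ^ 2).natDegree = 2 * D.natDegree := by rw [hD.natDegree_pow]
  rw [hsplit]
  constructor
  · refine (natDegree_add_le _ _).trans (max_le ?_ ?_)
    · refine (natDegree_C_mul_le _ _).trans (natDegree_mul_le.trans ?_)
      rw [hdeg]; have := natDegree_X_le (R := R); omega
    · exact (natDegree_C_mul_le _ _).trans (by omega)
  · rw [coeff_add, coeff_C_mul, coeff_C_mul, coeff_X_mul, ← hdeg, (hD.pow 2).coeff_natDegree,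
      coeff_eq_zero_of_natDegree_lt (by omega)]
    ring

section Hermite

variable {ι : Type*} [Fintype ι]

theorem eq_of_natDegree_lt_of_eval_eq_of_eval_derivative_eq {w : ι → K}
    (hw : Function.Injective w) {P R : K[X]} (hP : P.natDegree < 2 * Fintype.card ι)
    (hR : R.natDegree < 2 * Fintype.card ι) (h0 : ∀ i, P.eval (w i) = R.eval (w i))
    (h1 : ∀ i, (derivative P).eval (w i) = (derivative R).eval (w i)) : P = R := by
  have hdvd : ∏ i, (X - C (w i)) ^ 2 ∣ P - R := by
    refine prod_dvd_of_coprime (fun i _ j _ hij => ((pairwise_coprime_X_sub_C hw) hij).pow) ?_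
    refine fun i _ => X_sub_C_sq_dvd_of_isRoot_derivative ?_ ?_
    · simp [IsRoot.def, h0 i]
    · simp [IsRoot.def, h1 i]
  have hdeg : (∏ i, (X - C (w i)) ^ 2).natDegree = 2 * Fintype.card ι := by
    rw [natDegree_prod_of_monic _ _ fun i _ => (monic_X_sub_C (w i)).pow 2]
    simp [mul_comm]
  refine sub_eq_zero.1 (eq_zero_of_dvd_of_natDegree_lt hdvd ?_)
  exact hdeg ▸ (natDegree_sub_le P R).trans_lt (max_lt hP hR)

variable [DecidableEq ι]

theorem eval_derivative_nodal_erase_self {w : ι → K} (hw : Function.Injective w) (j : ι) :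
    (derivative (Lagrange.nodal (univ.erase j) w)).eval (w j) =
      (∏ k ∈ univ.erase j, (w j - w k)) * ∑ k ∈ univ.erase j, (w j - w k)⁻¹ := by
  have hne : ∀ k ∈ univ.erase j, w j - w k ≠ 0 := fun k hk =>
    sub_ne_zero.2 (hw.ne (ne_of_mem_erase hk).symm)
  rw [Lagrange.nodal_eq, eval_derivative_prod_eq_eval_prod_mul_sum]
  · simp [eval_prod]
  · simpa using hne

noncomputable def hermiteCombination (w α β : ι → K) : K[X] :=
  ∑ j, Lagrange.nodal (univ.erase j) w ^ 2 * (C (α j) + C (β j) * (X - C (w j)))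

theorem natDegree_hermiteCombination_le (w α β : ι → K) :
    (hermiteCombination w α β).natDegree ≤ 2 * (Fintype.card ι - 1) + 1 := by
  refine natDegree_sum_le_of_forall_le _ _ fun j _ => ?_
  simpa [Lagrange.natDegree_nodal] using
    (Lagrange.nodal_monic (s := univ.erase j) (v := w)).coeff_sq_mul_C_add_C_mul_X_sub_C
      (w j) (α j) (β j) |>.1

theorem coeff_hermiteCombination (w α β : ι → K) :
    (hermiteCombination w α β).coeff (2 * (Fintype.card ι - 1) + 1) = ∑ j, β j := by
  rw [hermiteCombination, finsetSum_coeff]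
  refine sum_congr rfl fun j _ => ?_
  simpa [Lagrange.natDegree_nodal] using
    (Lagrange.nodal_monic (s := univ.erase j) (v := w)).coeff_sq_mul_C_add_C_mul_X_sub_C
      (w j) (α j) (β j) |>.2

theorem eval_hermiteCombination_at_node {w : ι → K} (hw : Function.Injective w) (α β : ι → K)
    (i : ι) :
    (hermiteCombination w α β).eval (w i) =
        (∏ k ∈ univ.erase i, (w i - w k)) ^ 2 * α i ∧
      (derivative (hermiteCombination w α β)).eval (w i) =
        (∏ k ∈ univ.erase i, (w i - w k)) ^ 2 *
          (2 * (∑ k ∈ univ.erase i, (w i - w k)⁻¹) * α i + β i) := by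
  have hothers : ∀ j ≠ i, ((Lagrange.nodal (univ.erase j) w) ^ 2 *
      (C (α j) + C (β j) * (X - C (w j)))).IsRoot (w i) ∧
      (derivative ((Lagrange.nodal (univ.erase j) w) ^ 2 *
        (C (α j) + C (β j) * (X - C (w j))))).IsRoot (w i) := fun j hji =>
    isRoot_sq_mul_and_isRoot_derivative
      (Lagrange.eval_nodal_at_node (mem_erase.2 ⟨hji.symm, mem_univ i⟩)) _
  obtain ⟨hval, hder⟩ :=
    eval_sq_mul_C_add_C_mul_X_sub_C_self (Lagrange.nodal (univ.erase i) w) (w i) (α i) (β i)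
  rw [Lagrange.eval_nodal] at hval hder
  rw [eval_derivative_nodal_erase_self hw] at hder
  simp only [hermiteCombination, derivative_sum, eval_finsetSum]
  rw [sum_eq_single i (fun j _ hji => (hothers j hji).1) (by simp),
    sum_eq_single i (fun j _ hji => (hothers j hji).2) (by simp), hval, hder]
  exact ⟨rfl, by ring⟩

/-- The residue at `w j` of the rational function `P / ∏ k, (X - w k) ^ 2`. -/
noncomputable def residueDivNodalSq (P : K[X]) (w : ι → K) (j : ι) : K :=
  ((derivative P).eval (w j) - 2 * P.eval (w j) * ∑ k ∈ univ.erase j, (w j - w k)⁻¹) /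
    (∏ k ∈ univ.erase j, (w j - w k)) ^ 2

theorem sum_residueDivNodalSq_eq_zero {w : ι → K} (hw : Function.Injective w) {P : K[X]}
    (hP : P.natDegree + 1 < 2 * Fintype.card ι) : ∑ j, residueDivNodalSq P w j = 0 := by
  have hc : ∀ i, ∏ k ∈ univ.erase i, (w i - w k) ≠ 0 := fun i =>
    prod_ne_zero_iff.2 fun k hk => sub_ne_zero.2 (hw.ne (ne_of_mem_erase hk).symm)
  have hPR : P = hermiteCombination w
      (fun j => P.eval (w j) / (∏ k ∈ univ.erase j, (w j - w k)) ^ 2) (residueDivNodalSq P w) := by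
    refine eq_of_natDegree_lt_of_eval_eq_of_eval_derivative_eq hw (by omega)
      ((natDegree_hermiteCombination_le _ _ _).trans_lt (by omega)) (fun i => ?_) (fun i => ?_)
    · rw [(eval_hermiteCombination_at_node hw _ _ i).1]
      field_simp [hc i]
    · rw [(eval_hermiteCombination_at_node hw _ _ i).2, residueDivNodalSq]
      field_simp [hc i]
      ring
  rw [← coeff_hermiteCombination, ← hPR]
  exact coeff_eq_zero_of_natDegree_lt (by omega)

end Hermite

theorem eval_derivative_X_pow_mul_prod {ι : Type*} [Fintype ι] [DecidableEq ι] (m : ℕ)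
    (w : ι → K) {z : K} (hz : z ≠ 0) (hw : ∀ k, z + w k ≠ 0) :
    (derivative (X ^ m * ∏ k, (X + C (w k)))).eval z =
      (X ^ m * ∏ k, (X + C (w k))).eval z * (m / z + ∑ k, (z + w k)⁻¹) := by
  have hlog := eval_derivative_prod_eq_eval_prod_mul_sum univ (fun k => X + C (w k)) (z := z)
    (by simpa using hw)
  simp only [derivative_mul, derivative_X_pow, eval_add, eval_mul, hlog]
  rcases m with _ | m
  · simp
  · simp [pow_succ]
    field_simp

end Polynomial

namespace Real

theorem deriv_cosh_div_sinh_sq {z : ℝ} (hz : z ≠ 0) :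
    deriv (fun t => cosh t / sinh t ^ 2) z =
      cosh z / sinh z ^ 2 * (sinh z / cosh z - 2 * cosh z / sinh z) := by
  have hs : sinh z ≠ 0 := sinh_ne_zero.2 hz
  have hc : cosh z ≠ 0 := (cosh_pos z).ne'
  have h : HasDerivAt (fun t => cosh t / sinh t ^ 2) _ z :=
    (hasDerivAt_cosh z).div ((hasDerivAt_sinh z).pow 2) (pow_ne_zero 2 hs)
  rw [h.deriv]
  field_simp
  ring

theorem cosh_sub_eq_exp (u v : ℝ) :
    cosh (u - v) = (exp u ^ 2 + exp v ^ 2) / (2 * exp u * exp v) := by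
  rw [cosh_eq, exp_sub, neg_sub, exp_sub]
  field_simp

theorem sinh_sub_eq_exp (u v : ℝ) :
    sinh (u - v) = (exp u ^ 2 - exp v ^ 2) / (2 * exp u * exp v) := by
  rw [sinh_eq, exp_sub, neg_sub, exp_sub]
  field_simp

theorem cosh_sub_div_sinh_sub_sq (u v : ℝ) :
    cosh (u - v) / sinh (u - v) ^ 2 =
      2 * exp u * exp v * (exp u ^ 2 + exp v ^ 2) / (exp u ^ 2 - exp v ^ 2) ^ 2 := by
  rw [cosh_sub_eq_exp, sinh_sub_eq_exp]
  field_simp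

end Real

open Real

theorem sum_sub_div_add_sub_two_mul_add_div_sub {ι K : Type*} [Field K] [CharZero K]
    {s : Finset ι} {m : ℕ} (hs : #s = 2 * m + 1) {u : K} (v : ι → K) (hu : u ≠ 0)
    (hadd : ∀ k ∈ s, u + v k ≠ 0) (hsub : ∀ k ∈ s, u - v k ≠ 0) :
    ∑ k ∈ s, ((u - v k) / (u + v k) - 2 * (u + v k) / (u - v k)) =
      2 * u * (m / u + (u + u)⁻¹ + ∑ k ∈ s, (u + v k)⁻¹ - 2 * ∑ k ∈ s, (u - v k)⁻¹) := by
  have hterm : ∀ k ∈ s, (u - v k) / (u + v k) - 2 * (u + v k) / (u - v k) =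
      1 + 2 * u * (u + v k)⁻¹ - 4 * u * (u - v k)⁻¹ := fun k hk => by
    field_simp [hadd k hk, hsub k hk]
    ring
  rw [sum_congr rfl hterm, sum_sub_distrib, sum_add_distrib, ← mul_sum, ← mul_sum, sum_const, hs]
  field_simp
  ring

section

variable {ι : Type*} [Fintype ι] [DecidableEq ι] {m : ℕ}

theorem prod_erase_cosh_div_sinh_sq (hcard : Fintype.card ι = 2 * m + 2) (x : ι → ℝ) (j : ι) :
    ∏ l ∈ univ.erase j, cosh (x j - x l) / sinh (x j - x l) ^ 2 =
      2 ^ (2 * m + 1) * (∏ l, exp (x l)) * (exp (x j) ^ 2) ^ m *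
        (∏ l ∈ univ.erase j, (exp (x j) ^ 2 + exp (x l) ^ 2)) /
          (∏ l ∈ univ.erase j, (exp (x j) ^ 2 - exp (x l) ^ 2)) ^ 2 := by
  have hcard' : #(univ.erase j) = 2 * m + 1 := by
    rw [card_erase_of_mem (mem_univ j), card_univ]; omega
  simp only [cosh_sub_div_sinh_sub_sq, prod_div_distrib, prod_mul_distrib, prod_const, hcard',
    prod_pow]
  rw [← mul_prod_erase univ (fun l => exp (x l)) (mem_univ j)]
  ring

theorem sum_erase_deriv_mul_prod_erase_eq_residue (hcard : Fintype.card ι = 2 * m + 2)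
    {x : ι → ℝ} (hx : Function.Injective x) (j : ι) :
    ∑ k ∈ univ.erase j, deriv (fun t => cosh t / sinh t ^ 2) (x j - x k) *
        ∏ l ∈ (univ.erase j).erase k, cosh (x j - x l) / sinh (x j - x l) ^ 2 =
      2 ^ (2 * m + 1) * (∏ l, exp (x l)) *
        residueDivNodalSq (X ^ m * ∏ k, (X + C (exp (x k) ^ 2))) (fun k => exp (x k) ^ 2) j := by
  have hxne : ∀ k ∈ univ.erase j, x j - x k ≠ 0 := fun k hk =>
    sub_ne_zero.2 (hx.ne (ne_of_mem_erase hk).symm)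
  have hwne : ∀ k ∈ univ.erase j, exp (x j) ^ 2 - exp (x k) ^ 2 ≠ 0 := fun k hk => by
    rw [sub_ne_zero, Ne, pow_left_inj₀ (exp_pos _).le (exp_pos _).le two_ne_zero, exp_eq_exp]
    exact hx.ne (ne_of_mem_erase hk).symm
  have hwadd : ∀ k, exp (x j) ^ 2 + exp (x k) ^ 2 ≠ 0 := fun k => by positivity
  have hF : ∀ k ∈ univ.erase j, cosh (x j - x k) / sinh (x j - x k) ^ 2 ≠ 0 := fun k hk =>
    div_ne_zero (cosh_pos _).ne' (pow_ne_zero 2 (sinh_ne_zero.2 (hxne k hk)))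
  have hlog : ∀ k ∈ univ.erase j, deriv (fun t => cosh t / sinh t ^ 2) (x j - x k) /
      (cosh (x j - x k) / sinh (x j - x k) ^ 2) =
        (exp (x j) ^ 2 - exp (x k) ^ 2) / (exp (x j) ^ 2 + exp (x k) ^ 2) -
          2 * (exp (x j) ^ 2 + exp (x k) ^ 2) / (exp (x j) ^ 2 - exp (x k) ^ 2) := fun k hk => by
    rw [deriv_cosh_div_sinh_sq (hxne k hk), mul_div_cancel_left₀ _ (hF k hk), cosh_sub_eq_exp,
      sinh_sub_eq_exp]
    field_simp
  have hcard' : #(univ.erase j) = 2 * m + 1 := by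
    rw [card_erase_of_mem (mem_univ j), card_univ]; omega
  rw [sum_mul_prod_erase_eq_prod_mul_sum_div _ _ _ hF, sum_congr rfl hlog,
    prod_erase_cosh_div_sinh_sq hcard,
    sum_sub_div_add_sub_two_mul_add_div_sub hcard' _ (by positivity) (fun k _ => hwadd k) hwne,
    residueDivNodalSq, eval_derivative_X_pow_mul_prod m _ (by positivity) hwadd,
    ← add_sum_erase univ _ (mem_univ j)]
  simp only [eval_mul, eval_pow, eval_X, eval_prod, eval_add, eval_C]
  rw [← mul_prod_erase univ (fun k => exp (x j) ^ 2 + exp (x k) ^ 2) (mem_univ j)]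
  field_simp
  ring

theorem sum_sum_deriv_mul_prod_eq_zero (hcard : Fintype.card ι = 2 * m + 2) {x : ι → ℝ}
    (hx : Function.Injective x) :
    ∑ j, ∑ k ∈ univ.erase j, deriv (fun t => cosh t / sinh t ^ 2) (x j - x k) *
        ∏ l ∈ (univ.erase j).erase k, cosh (x j - x l) / sinh (x j - x l) ^ 2 = 0 := by
  have hw : Function.Injective fun k => exp (x k) ^ 2 := fun i k h => hx <| exp_injective <|
    (pow_left_inj₀ (exp_pos _).le (exp_pos _).le two_ne_zero).1 h
  have hdeg : (X ^ m * ∏ k, (X + C (exp (x k) ^ 2))).natDegree = m + (2 * m + 2) := by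
    rw [(monic_X_pow m).natDegree_mul (monic_prod_of_monic _ _ fun k _ => monic_X_add_C _),
      natDegree_prod_of_monic _ _ fun k _ => monic_X_add_C _]
    simp only [natDegree_X_pow, natDegree_X_add_C, sum_const, card_univ, hcard, smul_eq_mul,
      mul_one]
  rw [sum_congr rfl fun j _ => sum_erase_deriv_mul_prod_erase_eq_residue hcard hx j, ← mul_sum,
    sum_residueDivNodalSq_eq_zero hw (by omega), mul_zero]

end

theorem stmt_7_general (n : ℕ) (hneven : Even n) (x : Fin n → ℝ)
    (hx : Function.Injective x) :
    ∑ j : Fin n, ∑ k ∈ univ.erase j,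
      deriv (fun t => Real.cosh t / Real.sinh t ^ 2) (x j - x k) *
        ∏ l ∈ (univ.erase j).erase k,
          Real.cosh (x j - x l) / Real.sinh (x j - x l) ^ 2 = 0 := by
  obtain ⟨_ | m, rfl⟩ := hneven
  · simp
  · exact sum_sum_deriv_mul_prod_eq_zero (by simp; ring) hx

/-- the new solution `F(x) = cosh(x)/sinh²(x)` satisfies
`∑ⱼ ∑_{k≠j} F'(xⱼ−x_k) ∏_{l≠j,k} F(xⱼ−x_l) = 0`
for every even `n ≥ 4` and all pairwise distinct real `x₁, …, xₙ`. -/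
theorem stmt_7 (n : ℕ) (hn : 4 ≤ n) (hneven : Even n) (x : Fin n → ℝ)
    (hx : Function.Injective x) :
    ∑ j : Fin n, ∑ k ∈ univ.erase j,
      deriv (fun t => Real.cosh t / Real.sinh t ^ 2) (x j - x k) *
        ∏ l ∈ (univ.erase j).erase k,
          Real.cosh (x j - x l) / Real.sinh (x j - x l) ^ 2 = 0 :=
  stmt_7_general n hneven x hx
end

section
/- Let n ≥ 4 be even and let F(x) = cos(x)/sin²(x). For all real numbers x₁, …, xₙ such that x_j - x_k is not an integer multiple of π for all j ≠ k, one has Σ_{j=1}^n Σ_{k≠j} F'(x_j - x_k) Π_{l≠j,l≠k} F(x_j - x_l) = 0. -/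
/-!
Put `z_j = exp (i x_j)` and `a_j = z_j ^ 2`. Then
`F (x_j - x_l) = -2 z_j z_l (a_j + a_l) / (a_j - a_l) ^ 2`, and similarly for `F'`. Each summand
carries the factor `z_j ^ (n - 2)`, which for `n = 2m + 2` is the polynomial `a_j ^ m`; after
removing a common constant, the `j`-th inner sum is minus the residue at `a_j` of
`X ^ m ∏ l, (X + a_l) / ∏ l, (X - a_l) ^ 2`. The numerator has degree `m + n ≤ 2n - 2`, so the
residue at infinity vanishes and so does the sum of the finite residues. Algebraically: the
Hermite interpolant of the numerator at the double nodes `a_k` is the numerator itself, and its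
coefficient of `X ^ (2n - 1)` is the sum of the residues.
-/

open Finset Polynomial Lagrange

namespace Polynomial

theorem sq_dvd_of_isRoot_of_isRoot_derivative {R : Type*} [CommRing R] {p : R[X]} {t : R}
    (h0 : p.IsRoot t) (h1 : p.derivative.IsRoot t) : (X - C t) ^ 2 ∣ p := by
  rcases eq_or_ne p 0 with rfl | hp
  · exact dvd_zero _
  · exact (le_rootMultiplicity_iff hp).1 ((one_lt_rootMultiplicity_iff_isRoot hp).2 ⟨h0, h1⟩)

theorem eq_zero_of_forall_sq_dvd {K ι : Type*} [Field K] [Fintype ι] {a : ι → K}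
    (ha : Function.Injective a) {p : K[X]} (hdvd : ∀ i, (X - C (a i)) ^ 2 ∣ p)
    (hp : p.natDegree < 2 * Fintype.card ι) : p = 0 := by
  have hprod : nodal univ a ^ 2 ∣ p := by
    rw [nodal, ← prod_pow]
    exact Fintype.prod_dvd_of_coprime (fun i j hij => (pairwise_coprime_X_sub_C ha hij).pow) hdvd
  refine eq_zero_of_dvd_of_natDegree_lt hprod ?_
  rwa [natDegree_pow, natDegree_nodal, card_univ]

end Polynomial

namespace Lagrange

variable {K ι : Type*} [Field K] [Fintype ι] [DecidableEq ι] (a : ι → K)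

/-- The residue at `a k` of `N / ∏ i, (X - a i) ^ 2`, that is, the derivative at `a k` of
`N / (nodal (univ.erase k) a) ^ 2`. -/
noncomputable def residueDivNodalSq (N : K[X]) (k : ι) : K :=
  (N.derivative.eval (a k) * (nodal (univ.erase k) a).eval (a k)
      - 2 * N.eval (a k) * (nodal (univ.erase k) a).derivative.eval (a k))
    / (nodal (univ.erase k) a).eval (a k) ^ 3

theorem natDegree_linear_mul_nodal_erase_sq_le (k : ι) (α β : K) :
    ((C α + C β * (X - C (a k))) * nodal (univ.erase k) a ^ 2).natDegree
      ≤ 2 * Fintype.card ι - 1 := by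
  have hcard : 1 ≤ Fintype.card ι := Fintype.card_pos_iff.2 ⟨k⟩
  refine natDegree_mul_le.trans ?_
  have hlin : (C α + C β * (X - C (a k))).natDegree ≤ 1 :=
    (natDegree_add_le _ _).trans (max_le (by simp) (natDegree_C_mul_le _ _ |>.trans (by simp)))
  rw [natDegree_pow, natDegree_nodal, card_erase_of_mem (mem_univ k), card_univ]
  omega

theorem coeff_linear_mul_nodal_erase_sq (k : ι) (α β : K) :
    ((C α + C β * (X - C (a k))) * nodal (univ.erase k) a ^ 2).coeff (2 * Fintype.card ι - 1)
      = β := by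
  have hcard : 1 ≤ Fintype.card ι := Fintype.card_pos_iff.2 ⟨k⟩
  have hdeg : (nodal (univ.erase k) a ^ 2).natDegree = 2 * Fintype.card ι - 2 := by
    rw [natDegree_pow, natDegree_nodal, card_erase_of_mem (mem_univ k), card_univ]
    omega
  have hmonic : ((X - C (a k)) * nodal (univ.erase k) a ^ 2).Monic :=
    (monic_X_sub_C _).mul (nodal_monic.pow 2)
  have hdeg' :
      ((X - C (a k)) * nodal (univ.erase k) a ^ 2).natDegree = 2 * Fintype.card ι - 1 := by
    rw [(monic_X_sub_C _).natDegree_mul (nodal_monic.pow 2), hdeg, natDegree_X_sub_C]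
    omega
  rw [add_mul, coeff_add, mul_assoc, coeff_C_mul, coeff_C_mul, ← hdeg', hmonic.coeff_natDegree,
    coeff_eq_zero_of_natDegree_lt (by omega), mul_zero, zero_add, mul_one]

theorem sum_residueDivNodalSq_eq_zero (ha : Function.Injective a) {N : K[X]}
    (hN : N.natDegree + 2 ≤ 2 * Fintype.card ι) : ∑ k, residueDivNodalSq a N k = 0 := by
  have hw : ∀ k, (nodal (univ.erase k) a).eval (a k) ≠ 0 := fun k =>
    eval_nodal_not_at_node fun j hj => ha.ne (mem_erase.1 hj).1.symm
  set A : ι → K := fun k => N.eval (a k) / (nodal (univ.erase k) a).eval (a k) ^ 2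
  -- the Hermite interpolant of `N` at the double nodes `a k`
  set H := ∑ k,
    (C (A k) + C (residueDivNodalSq a N k) * (X - C (a k))) * nodal (univ.erase k) a ^ 2 with hH
  have hNH : N = H := by
    rw [← sub_eq_zero]
    refine eq_zero_of_forall_sq_dvd ha (fun k => ?_) ?_
    · rw [hH, ← add_sum_erase _ _ (mem_univ k), ← sub_sub]
      refine dvd_sub (sq_dvd_of_isRoot_of_isRoot_derivative ?_ ?_) (dvd_sum fun j hj => ?_)
      · simp [A, hw k]
      · have := hw k
        simp [A, residueDivNodalSq, derivative_mul, derivative_pow]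
        field_simp
        ring
      · exact (pow_dvd_pow_of_dvd (X_sub_C_dvd_nodal a
          (mem_erase.2 ⟨(mem_erase.1 hj).1.symm, mem_univ k⟩)) 2).mul_left _
    · refine (natDegree_sub_le _ _).trans_lt (max_lt (by omega) ?_)
      refine (natDegree_sum_le_of_forall_le _ _ fun k _ =>
        natDegree_linear_mul_nodal_erase_sq_le a k _ _).trans_lt ?_
      omega
  calc ∑ k, residueDivNodalSq a N k = H.coeff (2 * Fintype.card ι - 1) := by
        simp only [hH, finsetSum_coeff, coeff_linear_mul_nodal_erase_sq]
    _ = 0 := by rw [← hNH]; exact coeff_eq_zero_of_natDegree_lt (by omega)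

theorem eval_derivative_X_pow_mul_nodal_neg (m : ℕ) (j : ι) :
    (X ^ m * nodal univ (-a)).derivative.eval (a j) =
      (2 * m + 1) * a j ^ m * ∏ l ∈ univ.erase j, (a j + a l)
        + 2 * a j ^ (m + 1) *
          ∑ k ∈ univ.erase j, ∏ l ∈ (univ.erase j).erase k, (a j + a l) := by
  have hprod : ∀ k,
      eval (a j) (nodal (univ.erase k) (-a)) = ∏ l ∈ univ.erase k, (a j + a l) :=
    fun k => by simp [eval_nodal]
  have hpow : (m : K) * a j ^ (m - 1) * a j = m * a j ^ m := by
    rcases m with _ | m <;> simp [pow_succ, mul_assoc]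
  have hterm : ∀ k ∈ univ.erase j, ∏ l ∈ univ.erase k, (a j + a l)
      = 2 * a j * ∏ l ∈ (univ.erase j).erase k, (a j + a l) := by
    intro k hk
    rw [← mul_prod_erase _ _ (mem_erase.2 ⟨(ne_of_mem_erase hk).symm, mem_univ j⟩),
      erase_right_comm, two_mul]
  have hQ : eval (a j) (nodal univ (-a)) = 2 * a j * ∏ l ∈ univ.erase j, (a j + a l) := by
    rw [eval_nodal, ← mul_prod_erase _ _ (mem_univ j)]
    simp [two_mul]
  simp only [derivative_mul, derivative_X_pow, derivative_nodal, eval_add, eval_mul,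
    eval_finsetSum, eval_C, eval_pow, eval_X, hQ]
  rw [← add_sum_erase _ _ (mem_univ j), hprod, sum_congr rfl fun k hk => (hprod k).trans
      (hterm k hk), ← mul_sum]
  linear_combination (2 * ∏ l ∈ univ.erase j, (a j + a l)) * hpow

theorem residueDivNodalSq_X_pow_mul_nodal_neg (ha : Function.Injective a) {m : ℕ}
    (hcard : Fintype.card ι = 2 * m + 2) (j : ι) :
    residueDivNodalSq a (X ^ m * nodal univ (-a)) j =
      -∑ k ∈ univ.erase j, a j ^ m * (a j ^ 2 + 6 * a j * a k + a k ^ 2) / (a j - a k) ^ 3 *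
        ∏ l ∈ (univ.erase j).erase k, (a j + a l) / (a j - a l) ^ 2 := by
  have hS : (2 * m + 1 : K) = #(univ.erase j) := by
    rw [card_erase_of_mem (mem_univ j), card_univ, hcard]; push_cast; ring
  have hN : eval (a j) (X ^ m * nodal univ (-a))
      = 2 * a j ^ (m + 1) * ∏ l ∈ univ.erase j, (a j + a l) := by
    rw [eval_mul, eval_nodal, ← mul_prod_erase _ _ (mem_univ j)]
    simp only [eval_pow, eval_X, Pi.neg_apply, sub_neg_eq_add, pow_succ]
    ring
  have hw : eval (a j) (nodal (univ.erase j) a) ≠ 0 :=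
    eval_nodal_not_at_node fun l hl => ha.ne (ne_of_mem_erase hl).symm
  rw [residueDivNodalSq, eval_derivative_X_pow_mul_nodal_neg, hN, derivative_nodal,
    eval_finsetSum, div_eq_iff (pow_ne_zero 3 hw), neg_mul, sum_mul, ← sum_neg_distrib]
  -- spread the factor `2 * m + 1 = #(univ.erase j)` over the sum
  trans ∑ k ∈ univ.erase j,
    (a j ^ m * (∏ l ∈ univ.erase j, (a j + a l)) * eval (a j) (nodal (univ.erase j) a)
      + 2 * a j ^ (m + 1) * (∏ l ∈ (univ.erase j).erase k, (a j + a l))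
        * eval (a j) (nodal (univ.erase j) a)
      - 4 * a j ^ (m + 1) * (∏ l ∈ univ.erase j, (a j + a l))
        * eval (a j) (nodal ((univ.erase j).erase k) a))
  · simp only [sum_sub_distrib, sum_add_distrib, sum_const, nsmul_eq_mul, ← sum_mul, ← mul_sum]
    rw [← hS]
    ring
  refine sum_congr rfl fun k hk => ?_
  have hk' : a j - a k ≠ 0 := sub_ne_zero.2 (ha.ne (ne_of_mem_erase hk).symm)
  have hwk : eval (a j) (nodal ((univ.erase j).erase k) a) ≠ 0 :=
    eval_nodal_not_at_node fun l hl => ha.ne (ne_of_mem_erase (mem_of_mem_erase hl)).symm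
  rw [← mul_prod_erase _ _ hk, nodal_eq_mul_nodal_erase hk, prod_div_distrib, prod_pow,
    ← eval_nodal]
  simp only [eval_mul, eval_sub, eval_X, eval_C]
  field_simp
  ring

theorem sum_sum_mul_prod_eq_zero (ha : Function.Injective a) {m : ℕ}
    (hcard : Fintype.card ι = 2 * m + 2) :
    ∑ j, ∑ k ∈ univ.erase j, a j ^ m * (a j ^ 2 + 6 * a j * a k + a k ^ 2) / (a j - a k) ^ 3 *
      ∏ l ∈ (univ.erase j).erase k, (a j + a l) / (a j - a l) ^ 2 = 0 := by
  have hdeg : (X ^ m * nodal univ (-a)).natDegree + 2 ≤ 2 * Fintype.card ι := by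
    refine (Nat.add_le_add_right natDegree_mul_le 2).trans ?_
    rw [natDegree_X_pow, natDegree_nodal, card_univ]
    omega
  simpa only [residueDivNodalSq_X_pow_mul_nodal_neg a ha hcard, sum_neg_distrib, neg_eq_zero]
    using sum_residueDivNodalSq_eq_zero a ha hdeg

end Lagrange

namespace Complex

theorem exp_mul_I_sq_add_sq (p q : ℂ) :
    exp (p * I) ^ 2 + exp (q * I) ^ 2 = 2 * cos (p - q) * (exp (p * I) * exp (q * I)) := by
  have h₁ : exp ((p - q) * I) * exp (q * I) = exp (p * I) := by rw [← exp_add]; ring_nf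
  have h₂ : exp (-(p - q) * I) * exp (p * I) = exp (q * I) := by rw [← exp_add]; ring_nf
  rw [cos]
  linear_combination (-exp (p * I)) * h₁ - exp (q * I) * h₂

theorem exp_mul_I_sq_sub_sq (p q : ℂ) :
    exp (p * I) ^ 2 - exp (q * I) ^ 2 = 2 * I * sin (p - q) * (exp (p * I) * exp (q * I)) := by
  have h₁ : exp ((p - q) * I) * exp (q * I) = exp (p * I) := by rw [← exp_add]; ring_nf
  have h₂ : exp (-(p - q) * I) * exp (p * I) = exp (q * I) := by rw [← exp_add]; ring_nf
  rw [sin]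
  linear_combination (-exp (p * I)) * h₁ + exp (q * I) * h₂
    + (exp ((p - q) * I) - exp (-(p - q) * I)) * exp (p * I) * exp (q * I) * I_sq

theorem cos_div_sin_sq_sub (p q : ℂ) (h : sin (p - q) ≠ 0) :
    cos (p - q) / sin (p - q) ^ 2 = -2 * (exp (p * I) * exp (q * I)) *
      ((exp (p * I) ^ 2 + exp (q * I) ^ 2) / (exp (p * I) ^ 2 - exp (q * I) ^ 2) ^ 2) := by
  have huv : exp (p * I) * exp (q * I) ≠ 0 := mul_ne_zero (exp_ne_zero _) (exp_ne_zero _)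
  rw [exp_mul_I_sq_add_sq, exp_mul_I_sq_sub_sq]
  field_simp
  linear_combination cos (p - q) * I_sq

theorem one_add_cos_sq_div_sin_pow_three_sub (p q : ℂ) (h : sin (p - q) ≠ 0) :
    (1 + cos (p - q) ^ 2) / sin (p - q) ^ 3 = -2 * I * (exp (p * I) * exp (q * I)) *
      (((exp (p * I) ^ 2) ^ 2 + 6 * exp (p * I) ^ 2 * exp (q * I) ^ 2 + (exp (q * I) ^ 2) ^ 2)
        / (exp (p * I) ^ 2 - exp (q * I) ^ 2) ^ 3) := by
  have huv : exp (p * I) * exp (q * I) ≠ 0 := mul_ne_zero (exp_ne_zero _) (exp_ne_zero _)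
  rw [show (exp (p * I) ^ 2) ^ 2 + 6 * exp (p * I) ^ 2 * exp (q * I) ^ 2 + (exp (q * I) ^ 2) ^ 2
      = (exp (p * I) ^ 2 + exp (q * I) ^ 2) ^ 2 + 4 * (exp (p * I) * exp (q * I)) ^ 2 by ring,
    exp_mul_I_sq_add_sq, exp_mul_I_sq_sub_sq]
  field_simp
  linear_combination (4 + 4 * cos (p - q) ^ 2) * I_sq

end Complex

theorem Real.deriv_cos_div_sin_sq {t : ℝ} (h : Real.sin t ≠ 0) :
    deriv (fun t => Real.cos t / Real.sin t ^ 2) t = -(1 + Real.cos t ^ 2) / Real.sin t ^ 3 := by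
  have hd := (Real.hasDerivAt_cos t).div ((Real.hasDerivAt_sin t).pow 2) (pow_ne_zero 2 h)
  refine hd.deriv.trans ?_
  simp only [Pi.pow_apply]
  field_simp
  linear_combination (-Real.sin t) * Real.sin_sq_add_cos_sq t

open Complex in
theorem ofReal_deriv_mul_prod_eq {ι : Type*} [Fintype ι] [DecidableEq ι] {m : ℕ}
    (hcard : Fintype.card ι = 2 * m + 2) {x : ι → ℝ}
    (hx : ∀ j k, j ≠ k → Real.sin (x j - x k) ≠ 0) {z : ι → ℂ}
    (hz : ∀ j, exp (x j * I) = z j) {j k : ι} (hk : k ∈ univ.erase j) :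
    ((deriv (fun t => Real.cos t / Real.sin t ^ 2) (x j - x k) *
        ∏ l ∈ (univ.erase j).erase k, Real.cos (x j - x l) / Real.sin (x j - x l) ^ 2 : ℝ)
          : ℂ)
      = 2 * I * (4 ^ m * ∏ l, z l) *
        ((z j ^ 2) ^ m * ((z j ^ 2) ^ 2 + 6 * z j ^ 2 * z k ^ 2 + (z k ^ 2) ^ 2)
            / (z j ^ 2 - z k ^ 2) ^ 3 *
          ∏ l ∈ (univ.erase j).erase k, (z j ^ 2 + z l ^ 2) / (z j ^ 2 - z l ^ 2) ^ 2) := by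
  have hsin : ∀ l ≠ j, sin (x j - x l) ≠ 0 := fun l hl => by
    rw [← ofReal_sub, ← ofReal_sin]
    exact ofReal_ne_zero.2 (hx j l hl.symm)
  have hkj : k ≠ j := ne_of_mem_erase hk
  have hcard' : #((univ.erase j).erase k) = 2 * m := by
    rw [card_erase_of_mem hk, card_erase_of_mem (mem_univ j), card_univ, hcard]
    omega
  have hE : z j * z k * ∏ l ∈ (univ.erase j).erase k, (-2 * (z j * z l))
      = 4 ^ m * (z j ^ 2) ^ m * ∏ l, z l := by
    simp_rw [← mul_assoc]
    rw [prod_mul_distrib, prod_const, hcard', ← mul_prod_erase univ z (mem_univ j),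
      ← mul_prod_erase _ z hk, pow_mul]
    ring
  rw [ofReal_mul, ofReal_prod, Real.deriv_cos_div_sin_sq (hx j k hkj.symm)]
  push_cast
  rw [neg_div, one_add_cos_sq_div_sin_pow_three_sub _ _ (hsin k hkj),
    prod_congr rfl fun l hl => cos_div_sin_sq_sub _ _ (hsin l (ne_of_mem_erase
      (mem_of_mem_erase hl))), prod_mul_distrib]
  simp only [hz]
  linear_combination (2 * I * (((z j ^ 2) ^ 2 + 6 * z j ^ 2 * z k ^ 2 + (z k ^ 2) ^ 2)
    / (z j ^ 2 - z k ^ 2) ^ 3) *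
      ∏ l ∈ (univ.erase j).erase k, (z j ^ 2 + z l ^ 2) / (z j ^ 2 - z l ^ 2) ^ 2) * hE

theorem stmt_8_general (n : ℕ) (hneven : Even n) (x : Fin n → ℝ)
    (hx : ∀ j k : Fin n, j ≠ k → ∀ m : ℤ, x j - x k ≠ m * Real.pi) :
    ∑ j : Fin n, ∑ k ∈ univ.erase j,
      deriv (fun t => Real.cos t / Real.sin t ^ 2) (x j - x k) *
        ∏ l ∈ (univ.erase j).erase k,
          Real.cos (x j - x l) / Real.sin (x j - x l) ^ 2 = 0 := by
  obtain rfl | ⟨m, rfl⟩ : n = 0 ∨ ∃ m, n = 2 * m + 2 := by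
    obtain ⟨r, rfl⟩ := hneven
    rcases r with _ | r
    · exact Or.inl rfl
    · exact Or.inr ⟨r, by ring⟩
  · simp
  have hsin : ∀ j k, j ≠ k → Real.sin (x j - x k) ≠ 0 := fun j k hjk h => by
    obtain ⟨r, hr⟩ := Real.sin_eq_zero_iff.1 h
    exact hx j k hjk r hr.symm
  set z : Fin (2 * m + 2) → ℂ := fun j => Complex.exp (x j * Complex.I)
  have hinj : Function.Injective fun j => z j ^ 2 := fun j k hjk => by
    by_contra hne
    have h := Complex.exp_mul_I_sq_sub_sq (x j) (x k)
    simp only [z] at hjk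
    simp [hjk, Complex.exp_ne_zero, ← Complex.ofReal_sub, ← Complex.ofReal_sin, hsin j k hne]
      at h
  apply Complex.ofReal_injective
  simp only [Complex.ofReal_sum, Complex.ofReal_zero]
  have hterm := fun j k (hk : k ∈ univ.erase j) =>
    ofReal_deriv_mul_prod_eq (m := m) (Fintype.card_fin _) hsin (z := z) (fun _ => rfl) hk
  rw [sum_congr rfl fun j _ => sum_congr rfl (hterm j)]
  simp only [← mul_sum]
  exact mul_eq_zero_of_right _ (Lagrange.sum_sum_mul_prod_eq_zero _ hinj (Fintype.card_fin _))

/-- the new solution `F(x) = cos(x)/sin²(x)` satisfies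
`∑ⱼ ∑_{k≠j} F'(xⱼ−x_k) ∏_{l≠j,k} F(xⱼ−x_l) = 0` for every even `n ≥ 4` and all
real `x₁, …, xₙ` whose differences avoid the integer multiples of `π`. -/
theorem stmt_8 (n : ℕ) (hn : 4 ≤ n) (hneven : Even n) (x : Fin n → ℝ)
    (hx : ∀ j k : Fin n, j ≠ k → ∀ m : ℤ, x j - x k ≠ m * Real.pi) :
    ∑ j : Fin n, ∑ k ∈ univ.erase j,
      deriv (fun t => Real.cos t / Real.sin t ^ 2) (x j - x k) *
        ∏ l ∈ (univ.erase j).erase k,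
          Real.cos (x j - x l) / Real.sin (x j - x l) ^ 2 = 0 :=
  stmt_8_general n hneven x hx
end

section
/- Let n ≥ 2, let μ ≠ 0 be real, and let F be an even differentiable function defined on ℝ \ {0}. Then Σ_{j=1}^n Σ_{k≠j} F'((j-k)μ) Π_{l≠j,l≠k} F((j-l)μ) = 0, i.e. the expression Σ_{j=1}^n ∂_j Π_{k≠j} F(x_j - x_k) vanishes when evaluated at the equally spaced configuration x_j = jμ. -/
/-!
The reflection `j ↦ n - 1 - j` maps the configuration `x_j = jμ` onto itself with every
difference `x_j - x_k` negated. Since `F` is even, `F'` is odd, so the reflection negates the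
summand indexed by `(j, k)`; being a bijection of the index pairs, it shows that the sum equals
its own negative.
-/

open Finset

theorem deriv_neg_eq_neg_deriv_of_even {𝕜 E : Type*} [NontriviallyNormedField 𝕜]
    [NormedAddCommGroup E] [NormedSpace 𝕜 E] {F : 𝕜 → E}
    (heven : ∀ y : 𝕜, y ≠ 0 → F (-y) = F y) {x : 𝕜} (hx : x ≠ 0) :
    deriv F (-x) = -deriv F x := by
  have hF : (fun y => F (-y)) =ᶠ[nhds x] F := by
    filter_upwards [isOpen_ne.mem_nhds hx] with y hy using heven y hy
  rw [← hF.deriv_eq, deriv_comp_neg, neg_neg]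

theorem sum_sum_erase_eq_zero_of_antisymm {α M : Type*} [Fintype α] [DecidableEq α]
    [AddCommGroup M] [IsAddTorsionFree M] (σ : Equiv.Perm α) (f : α → α → M)
    (hf : ∀ j k, j ≠ k → f (σ j) (σ k) = -f j k) :
    ∑ j, ∑ k ∈ univ.erase j, f j k = 0 := by
  refine self_eq_neg.mp ?_
  calc ∑ j, ∑ k ∈ univ.erase j, f j k
      = ∑ j, ∑ k ∈ univ.erase (σ j), f (σ j) k := (Equiv.sum_comp σ _).symm
    _ = ∑ j, ∑ k ∈ univ.erase j, f (σ j) (σ k) := by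
        refine sum_congr rfl fun j _ => (sum_equiv σ (by simp) fun _ _ => rfl).symm
    _ = -∑ j, ∑ k ∈ univ.erase j, f j k := by
        simp only [← sum_neg_distrib]
        exact sum_congr rfl fun j _ => sum_congr rfl fun k hk => hf j k (ne_of_mem_erase hk).symm

theorem sum_deriv_mul_prod_eq_zero_of_reflection {α : Type*} [Fintype α] [DecidableEq α]
    (σ : Equiv.Perm α) (x : α → ℝ) (hx : Function.Injective x)
    (hσ : ∀ j k, x (σ j) - x (σ k) = -(x j - x k)) (F : ℝ → ℝ)
    (heven : ∀ y : ℝ, y ≠ 0 → F (-y) = F y) :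
    ∑ j, ∑ k ∈ univ.erase j,
      deriv F (x j - x k) * ∏ l ∈ (univ.erase j).erase k, F (x j - x l) = 0 := by
  refine sum_sum_erase_eq_zero_of_antisymm σ _ fun j k hjk => ?_
  have hprod : ∏ l ∈ (univ.erase (σ j)).erase (σ k), F (x (σ j) - x l)
      = ∏ l ∈ (univ.erase j).erase k, F (x j - x l) := by
    refine (prod_equiv σ (by simp) fun l hl => ?_).symm
    have hjl : j ≠ l := (ne_of_mem_erase (mem_of_mem_erase hl)).symm
    rw [hσ, heven _ (sub_ne_zero.mpr (hx.ne hjl))]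
  rw [hprod, hσ, deriv_neg_eq_neg_deriv_of_even heven (sub_ne_zero.mpr (hx.ne hjk)), neg_mul]

theorem stmt_10_general (n : ℕ) (μ : ℝ) (hμ : μ ≠ 0) (F : ℝ → ℝ)
    (heven : ∀ x : ℝ, x ≠ 0 → F (-x) = F x) :
    ∑ j : Fin n, ∑ k ∈ univ.erase j,
      deriv F (((j : ℕ) : ℝ) * μ - ((k : ℕ) : ℝ) * μ) *
        ∏ l ∈ (univ.erase j).erase k,
          F (((j : ℕ) : ℝ) * μ - ((l : ℕ) : ℝ) * μ) = 0 := by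
  refine sum_deriv_mul_prod_eq_zero_of_reflection Fin.revPerm (fun j => ((j : ℕ) : ℝ) * μ)
    (fun a b hab => Fin.ext (by exact_mod_cast mul_right_cancel₀ hμ hab)) (fun j k => ?_) F heven
  have hj : (j : ℕ) + 1 ≤ n := j.isLt
  have hk : (k : ℕ) + 1 ≤ n := k.isLt
  simp only [Fin.revPerm_apply, Fin.val_rev, Nat.cast_sub hj, Nat.cast_sub hk, Nat.cast_add]
  ring

/-- for an even differentiable `F` on `ℝ \ {0}`, the expression
`∑ⱼ ∂ⱼ ∏_{k≠j} F(xⱼ−x_k)` vanishes at the equally spaced configuration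
`x_j = jμ` (`μ ≠ 0`). -/
theorem stmt_10 (n : ℕ) (hn : 2 ≤ n) (μ : ℝ) (hμ : μ ≠ 0) (F : ℝ → ℝ)
    (hdiff : ∀ x : ℝ, x ≠ 0 → DifferentiableAt ℝ F x)
    (heven : ∀ x : ℝ, x ≠ 0 → F (-x) = F x) :
    ∑ j : Fin n, ∑ k ∈ univ.erase j,
      deriv F (((j : ℕ) : ℝ) * μ - ((k : ℕ) : ℝ) * μ) *
        ∏ l ∈ (univ.erase j).erase k,
          F (((j : ℕ) : ℝ) * μ - ((l : ℕ) : ℝ) * μ) = 0 :=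
  stmt_10_general n μ hμ F heven
end

section
/- For n ≥ 2 and pairwise distinct real numbers x₁, …, xₙ with x_j - x_k ≠ 0 for j ≠ k, one has Σ_{j=1}^n Π_{k≠j} coth(x_j - x_k) = 1 if n is odd, and Σ_{j=1}^n Π_{k≠j} coth(x_j - x_k) = 0 if n is even. -/
/-!
With `t j = exp (2 x j)` one has `coth (x j - x k) = (t j + t k) / (t j - t k)`. The polynomial
`∏ (X + t k) - ∏ (X - t k)` has degree `< n`, so it equals its Lagrange interpolant on the
nodes `t j`; evaluating both sides at `0` (a residue computation for `∏ (z + t k) / (z - t k)`)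
gives `2 ∑ⱼ ∏_{k ≠ j} (t j + t k) / (t j - t k) = 1 - (-1) ^ n` in any field.
-/

open Finset Polynomial Lagrange

section

variable {K ι : Type*} [Field K]

theorem Lagrange.degree_nodal_neg_sub_nodal_lt (s : Finset ι) (t : ι → K) :
    (nodal s (-t) - nodal s t).degree < #s := by
  rw [← degree_nodal (s := s) (v := -t)]
  exact degree_sub_lt_left (by rw [degree_nodal, degree_nodal]) nodal_ne_zero
    (by rw [nodal_monic.leadingCoeff, nodal_monic.leadingCoeff])

variable [DecidableEq ι]

theorem Lagrange.nodalWeight_mul_eval_nodal_neg_sub_nodal {s : Finset ι} {t : ι → K} {i : ι}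
    (hi : i ∈ s) (hti : t i ≠ 0) :
    nodalWeight s t i * (0 - t i)⁻¹ * (nodal s (-t) - nodal s t).eval (t i) =
      -2 * ∏ k ∈ s.erase i, (t i + t k) / (t i - t k) := by
  have hnodal : (nodal s (-t)).eval (t i) = (t i + t i) * ∏ k ∈ s.erase i, (t i + t k) := by
    simp only [eval_nodal, Pi.neg_apply, sub_neg_eq_add]
    exact (mul_prod_erase s (fun k => t i + t k) hi).symm
  rw [eval_sub, eval_nodal_at_node hi, sub_zero, hnodal, nodalWeight, zero_sub,
    prod_div_distrib, prod_inv_distrib]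
  field_simp
  ring

theorem two_mul_sum_prod_add_div_sub (s : Finset ι) {t : ι → K} (ht : Set.InjOn t s)
    (ht0 : ∀ i ∈ s, t i ≠ 0) :
    2 * ∑ j ∈ s, ∏ k ∈ s.erase j, (t j + t k) / (t j - t k) = 1 - (-1) ^ #s := by
  have h0 := congrArg (eval 0) (eq_interpolate ht (degree_nodal_neg_sub_nodal_lt s t))
  rw [eval_interpolate_not_at_node _ fun i hi => (ht0 i hi).symm,
    sum_congr rfl fun i hi => nodalWeight_mul_eval_nodal_neg_sub_nodal hi (ht0 i hi),
    ← mul_sum, eval_sub, eval_nodal, eval_nodal] at h0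
  simp only [zero_sub, Pi.neg_apply] at h0
  rw [prod_neg] at h0
  have hD : ∏ i ∈ s, -t i ≠ 0 := prod_ne_zero_iff.2 fun i hi => neg_ne_zero.2 (ht0 i hi)
  apply mul_right_cancel₀ hD
  linear_combination h0

end

theorem Real.cosh_sub_div_sinh_sub (x y : ℝ) :
    Real.cosh (x - y) / Real.sinh (x - y) =
      (Real.exp (2 * x) + Real.exp (2 * y)) / (Real.exp (2 * x) - Real.exp (2 * y)) := by
  have h2x : Real.exp (2 * x) = Real.exp (x + y) * Real.exp (x - y) := by
    rw [← Real.exp_add]; ring_nf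
  have h2y : Real.exp (2 * y) = Real.exp (x + y) * Real.exp (-(x - y)) := by
    rw [← Real.exp_add]; ring_nf
  rw [Real.cosh_eq, Real.sinh_eq, h2x, h2y, ← mul_add, ← mul_sub,
    div_div_div_cancel_right₀ two_ne_zero, mul_div_mul_left _ _ (Real.exp_pos _).ne']

theorem stmt_12_general (n : ℕ) (x : Fin n → ℝ)
    (hx : Function.Injective x) :
    (Odd n →
      ∑ j : Fin n, ∏ k ∈ univ.erase j,
        Real.cosh (x j - x k) / Real.sinh (x j - x k) = 1) ∧
    (Even n →
      ∑ j : Fin n, ∏ k ∈ univ.erase j,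
        Real.cosh (x j - x k) / Real.sinh (x j - x k) = 0) := by
  have ht : Function.Injective fun i => Real.exp (2 * x i) :=
    Real.exp_injective.comp ((mul_right_injective₀ two_ne_zero).comp hx)
  have key := two_mul_sum_prod_add_div_sub univ ht.injOn fun i _ => (Real.exp_pos (2 * x i)).ne'
  simp only [← Real.cosh_sub_div_sinh_sub, card_univ, Fintype.card_fin] at key
  refine ⟨fun hn => ?_, fun hn => ?_⟩
  · rw [hn.neg_one_pow] at key; linarith
  · rw [hn.neg_one_pow] at key; linarith

/-- `∑ⱼ ∏_{k≠j} coth(xⱼ−x_k)` equals `1` for odd `n` and `0` for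
even `n`, for all pairwise distinct real `x₁, …, xₙ` (`n ≥ 2`). -/
theorem stmt_12 (n : ℕ) (hn : 2 ≤ n) (x : Fin n → ℝ)
    (hx : Function.Injective x) :
    (Odd n →
      ∑ j : Fin n, ∏ k ∈ univ.erase j,
        Real.cosh (x j - x k) / Real.sinh (x j - x k) = 1) ∧
    (Even n →
      ∑ j : Fin n, ∏ k ∈ univ.erase j,
        Real.cosh (x j - x k) / Real.sinh (x j - x k) = 0) :=
  stmt_12_general n x hx
end

section
/- Let n ≥ 2 be even. For pairwise distinct real numbers x₁, …, xₙ, one has Σ_{j=1}^n Π_{k≠j} 1/sinh(x_j - x_k) = 0. -/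
/-!
With `tⱼ = exp (2 xⱼ)` one has `1 / sinh (xⱼ - x_k) = 2 exp (xⱼ + x_k) / (tⱼ - t_k)`, so for
`n = 2p` the `j`-th product is a factor independent of `j` times `tⱼ ^ (p - 1) / ∏_{k ≠ j} (tⱼ - t_k)`.
Summed over `j`, these quotients give the coefficient of `X ^ (n - 1)` in the Lagrange interpolant
of `X ^ (p - 1)` at the nodes `tⱼ`, which vanishes because `p - 1 < n - 1`.
-/

open Finset Polynomial Real

theorem Lagrange.sum_pow_div_prod_sub_eq_zero {F ι : Type*} [Field F] [DecidableEq ι]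
    {s : Finset ι} {v : ι → F} (hvs : Set.InjOn v s) {m : ℕ} (hm : m + 1 < #s) :
    ∑ i ∈ s, v i ^ m / ∏ j ∈ s.erase i, (v i - v j) = 0 := by
  have h := coeff_eq_sum hvs (P := X ^ m) (by rw [degree_X_pow]; exact_mod_cast by omega)
  simpa [coeff_X_pow, show #s - 1 ≠ m by omega] using h.symm

theorem Real.one_div_sinh_sub (a b : ℝ) :
    1 / sinh (a - b) = 2 * exp (a + b) / (exp (2 * a) - exp (2 * b)) := by
  have h : sinh (a - b) = (exp (2 * a) - exp (2 * b)) / (2 * exp (a + b)) := by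
    rw [sinh_eq, eq_div_iff (by positivity), show 2 * a = (a - b) + (a + b) by ring,
      show 2 * b = -(a - b) + (a + b) by ring, exp_add (a - b), exp_add (-(a - b))]
    ring
  rw [h, one_div_div]

theorem Real.prod_one_div_sinh_sub {ι : Type*} [DecidableEq ι] {s : Finset ι} (x : ι → ℝ)
    {j : ι} (hj : j ∈ s) :
    ∏ k ∈ s.erase j, 1 / sinh (x j - x k) =
      2 ^ (#s - 1) * exp (∑ k ∈ s, x k + (#s - 2) * x j) /
        ∏ k ∈ s.erase j, (exp (2 * x j) - exp (2 * x k)) := by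
  simp_rw [one_div_sinh_sub]
  rw [prod_div_distrib, prod_mul_distrib, prod_const, card_erase_of_mem hj, ← exp_sum,
    sum_add_distrib, sum_const, card_erase_of_mem hj, nsmul_eq_mul, ← add_sum_erase s x hj,
    Nat.cast_sub (card_pos.2 ⟨j, hj⟩)]
  ring_nf

/-- for even `n ≥ 2`, `∑ⱼ ∏_{k≠j} 1/sinh(xⱼ−x_k) = 0` for all
pairwise distinct real `x₁, …, xₙ`. -/
theorem stmt_14 (n : ℕ) (hn : 2 ≤ n) (hneven : Even n) (x : Fin n → ℝ)
    (hx : Function.Injective x) :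
    ∑ j : Fin n, ∏ k ∈ univ.erase j, 1 / Real.sinh (x j - x k) = 0 := by
  obtain ⟨p, rfl⟩ := hneven
  have hinj : Set.InjOn (fun j => exp (2 * x j)) (univ : Finset (Fin (p + p))) :=
    fun a _ b _ h => hx (by simpa using h)
  have hexp (j : Fin (p + p)) : exp (((p + p : ℕ) - 2 : ℝ) * x j) = exp (2 * x j) ^ (p - 1) := by
    rw [← exp_nat_mul, Nat.cast_sub (by omega)]
    push_cast
    ring_nf
  simp_rw [prod_one_div_sinh_sub x (mem_univ _), card_univ, Fintype.card_fin, exp_add, hexp,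
    ← mul_assoc, mul_div_assoc, ← mul_sum]
  exact mul_eq_zero_of_right _ (Lagrange.sum_pow_div_prod_sub_eq_zero hinj (by simp; omega))
end
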